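/- arXiv:2501.15750 — 7 statements merged into one kernel-verified Lean document; each statement's English description precedes it below -/
import Mathlib

section
/- Let K be a compact plane set containing the origin and let m ∈ ℕ. If the function z ↦ z^m (restricted to K) lies in the closure of J_0(R(K)), then the function z ↦ z^{2m} (restricted to √K) lies in the closure of J_0(R(√K)). -/
open scoped ENNReal
open Metric Set Filter

noncomputable section

/-- `R₀(K)`: restrictions to `K` of rational functions with poles off `K`. -/
def R0 (K : Set ℂ) : Set C(K, ℂ) :=
  {f | ∃ p q : Polynomial ℂ, (∀ z ∈ K, q.eval z ≠ 0) ∧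
      ∀ z : K, f z = p.eval (z : ℂ) / q.eval (z : ℂ)}

/-- `R(K)`: the uniform closure of `R₀(K)` in `C(K, ℂ)`. -/
def RK (K : Set ℂ) : Set C(K, ℂ) := closure (R0 K)

/-- `M_x`: the ideal of functions in `R(K)` vanishing at `x`. -/
def Mx (K : Set ℂ) (x : ℂ) : Set C(K, ℂ) :=
  {f | f ∈ RK K ∧ ∀ h : x ∈ K, f ⟨x, h⟩ = 0}

/-- `J_x`: the ideal of functions in `R(K)` vanishing on a neighborhood of `x` in `K`. -/
def Jx (K : Set ℂ) (x : ℂ) : Set C(K, ℂ) :=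
  {f | f ∈ RK K ∧ ∃ U : Set ℂ, IsOpen U ∧ x ∈ U ∧ ∀ z : K, (z : ℂ) ∈ U → f z = 0}

/-- The `m`-th ideal power of a set `S` in the ring `C(K, ℂ)`:
finite sums of `m`-fold products of elements of `S`. -/
def idealPow {K : Set ℂ} (S : Set C(K, ℂ)) (m : ℕ) : Set C(K, ℂ) :=
  {f | ∃ (n : ℕ) (g : Fin n → Fin m → C(K, ℂ)),
      (∀ i j, g i j ∈ S) ∧ f = ∑ i, ∏ j, g i j}

/-- `R(K)` is normal. -/
def RKNormal (K : Set ℂ) : Prop :=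
  ∀ K₀ K₁ : Set ℂ, K₀ ⊆ K → K₁ ⊆ K → IsClosed K₀ → IsClosed K₁ → Disjoint K₀ K₁ →
    ∃ f ∈ RK K, (∀ z : K, (z : ℂ) ∈ K₀ → f z = 0) ∧ (∀ z : K, (z : ℂ) ∈ K₁ → f z = 1)

/-- `R(K)` is strongly regular at `x`. -/
def StronglyRegularAt (K : Set ℂ) (x : ℂ) : Prop := closure (Jx K x) = Mx K x

/-- `R(K)` is weakly strongly regular. -/
def WeaklyStronglyRegular (K : Set ℂ) : Prop :=
  ∀ x ∈ K, ∃ m : ℕ, 1 ≤ m ∧ idealPow (Mx K x) m ⊆ closure (Jx K x)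

/-- A Swiss cheese: a compact subset of the closed unit disc with empty interior
such that `R(K) ≠ C(K)`. -/
def IsSwissCheese (K : Set ℂ) : Prop :=
  K.Nonempty ∧ IsCompact K ∧ K ⊆ closedBall (0 : ℂ) 1 ∧ interior K = ∅ ∧ RK K ≠ univ

/-- A point derivation of order `m` on `R(K)` at `a`. -/
def IsPDOrder (K : Set ℂ) (a : ℂ) (m : ℕ) (d : ℕ → C(K, ℂ) → ℂ) : Prop :=
  (∀ f ∈ RK K, ∀ h : a ∈ K, d 0 f = f ⟨a, h⟩) ∧
  (∀ k ≤ m, ∀ f ∈ RK K, ∀ g ∈ RK K, d k (f + g) = d k f + d k g) ∧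
  (∀ k ≤ m, ∀ c : ℂ, ∀ f ∈ RK K, d k (c • f) = c * d k f) ∧
  (∀ k, 1 ≤ k → k ≤ m → ∀ f ∈ RK K, ∀ g ∈ RK K,
      d k (f * g) = ∑ j ∈ Finset.range (k + 1), d j f * d (k - j) g)

/-- A point derivation of infinite order on `R(K)` at `a`. -/
def IsPDInf (K : Set ℂ) (a : ℂ) (d : ℕ → C(K, ℂ) → ℂ) : Prop :=
  (∀ f ∈ RK K, ∀ h : a ∈ K, d 0 f = f ⟨a, h⟩) ∧
  (∀ k, ∀ f ∈ RK K, ∀ g ∈ RK K, d k (f + g) = d k f + d k g) ∧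
  (∀ (k : ℕ) (c : ℂ), ∀ f ∈ RK K, d k (c • f) = c * d k f) ∧
  (∀ k, 1 ≤ k → ∀ f ∈ RK K, ∀ g ∈ RK K,
      d k (f * g) = ∑ j ∈ Finset.range (k + 1), d j f * d (k - j) g)

/-- There is a nondegenerate bounded point derivation of order `m` on `R(K)` at `a`. -/
def HasNBPD (K : Set ℂ) (a : ℂ) (m : ℕ) : Prop :=
  ∃ d : ℕ → C(K, ℂ) → ℂ, IsPDOrder K a m d ∧
    (∀ k ≤ m, Continuous fun f : RK K => d k f.1) ∧
    ∃ f ∈ RK K, d 1 f ≠ 0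

/-- There is a nondegenerate bounded point derivation of infinite order on `R(K)` at `a`. -/
def HasNBPDInf (K : Set ℂ) (a : ℂ) : Prop :=
  ∃ d : ℕ → C(K, ℂ) → ℂ, IsPDInf K a d ∧
    (∀ k, Continuous fun f : RK K => d k f.1) ∧
    ∃ f ∈ RK K, d 1 f ≠ 0

/-- The Browder term `r(D)/s_a(D)^{m+1}` for the disc with center `c` and radius `ρ`;
here `s_a(D) = |dist a c − ρ|` is the distance from `a` to the boundary circle. -/
def browderTerm (a c : ℂ) (ρ : ℝ) (m : ℕ) : ℝ≥0∞ :=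
  ENNReal.ofReal ρ / ENNReal.ofReal (|dist a c - ρ| ^ (m + 1))

/-- The `m`-th order Browder sum at `a` for a family of discs together with the unit disc. -/
def browderSum {ι : Type*} (c : ι → ℂ) (ρ : ι → ℝ) (a : ℂ) (m : ℕ) : ℝ≥0∞ :=
  browderTerm a 0 1 m + ∑' i, browderTerm a (c i) (ρ i) m

/-- Sup norm of `f` over `K`. -/
def supNormOn (K : Set ℂ) (f : ℂ → ℂ) : ℝ := ⨆ z : K, ‖f (z : ℂ)‖

/-- The rational function `p/q`. -/
def ratFun (p q : Polynomial ℂ) : ℂ → ℂ := fun z => p.eval z / q.eval z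

/-- `δ_{a,m}(f) = f⁽ᵐ⁾(a)/m!`. -/
def deltaVal (m : ℕ) (f : ℂ → ℂ) (a : ℂ) : ℂ := iteratedDeriv m f a / (m.factorial : ℂ)

/-- `δ_{a,m}` is continuous (bounded) on `R₀(K)` with respect to the sup norm. -/
def DeltaCont (K : Set ℂ) (a : ℂ) (m : ℕ) : Prop :=
  ∃ C : ℝ, ∀ p q : Polynomial ℂ, (∀ z ∈ K, q.eval z ≠ 0) →
    ‖deltaVal m (ratFun p q) a‖ ≤ C * supNormOn K (ratFun p q)

/-- The square root of a plane set: `{z : z² ∈ E}`. -/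
def sqrtSet (E : Set ℂ) : Set ℂ := {z | z ^ 2 ∈ E}

/-- The restriction of `z ↦ zᵐ` to `K`. -/
def zpowMap (K : Set ℂ) (m : ℕ) : C(K, ℂ) :=
  ⟨fun z => (z : ℂ) ^ m, continuous_subtype_val.pow m⟩

/-- The restriction of `z ↦ (z−a)ⁿ` to `K`. -/
def zamMap (K : Set ℂ) (a : ℂ) (n : ℕ) : C(K, ℂ) :=
  ⟨fun z => ((z : ℂ) - a) ^ n, (continuous_subtype_val.sub continuous_const).pow n⟩

/-! Composing with a polynomial map `φ : L → K` pulls back rational functions with poles off `K`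
to rational functions with poles off `L`, and functions vanishing near `φ a` to functions
vanishing near `a`; by continuity of precomposition this passes to closures. For `z ↦ z²`
from `√K` to `K` it sends `zᵐ` to `z²ᵐ`. -/

section PolynomialPullback

variable {K L : Set ℂ} (φ : C(L, K)) (P : Polynomial ℂ)
  (hφ : ∀ z, (φ z : ℂ) = P.eval (z : ℂ))
include hφ

theorem mapsTo_comp_R0 : MapsTo (fun f : C(K, ℂ) => f.comp φ) (R0 K) (R0 L) := by
  rintro f ⟨p, q, hq, hf⟩
  refine ⟨p.comp P, q.comp P, fun z hz => ?_, fun z => ?_⟩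
  · simpa [← hφ ⟨z, hz⟩] using hq _ (φ ⟨z, hz⟩).2
  · simpa [← hφ z] using hf (φ z)

theorem mapsTo_comp_RK : MapsTo (fun f : C(K, ℂ) => f.comp φ) (RK K) (RK L) :=
  (mapsTo_comp_R0 φ P hφ).closure (ContinuousMap.continuous_precomp φ)

theorem mapsTo_comp_Jx (a : ℂ) :
    MapsTo (fun f : C(K, ℂ) => f.comp φ) (Jx K (P.eval a)) (Jx L a) := by
  rintro f ⟨hfR, U, hU, haU, hvan⟩
  refine ⟨mapsTo_comp_RK φ P hφ hfR, P.eval ⁻¹' U, hU.preimage P.continuous, haU,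
    fun z hz => hvan (φ z) ?_⟩
  rwa [hφ]

theorem mapsTo_comp_closure_Jx (a : ℂ) :
    MapsTo (fun f : C(K, ℂ) => f.comp φ) (closure (Jx K (P.eval a))) (closure (Jx L a)) :=
  (mapsTo_comp_Jx φ P hφ a).closure (ContinuousMap.continuous_precomp φ)

end PolynomialPullback

def sqrtSetSq (K : Set ℂ) : C(sqrtSet K, K) :=
  ⟨fun z => ⟨(z : ℂ) ^ 2, z.2⟩, (continuous_subtype_val.pow 2).subtype_mk _⟩

theorem zpowMap_comp_sqrtSetSq (K : Set ℂ) (m : ℕ) :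
    (zpowMap K m).comp (sqrtSetSq K) = zpowMap (sqrtSet K) (2 * m) := by
  ext z
  simp [zpowMap, sqrtSetSq, ← pow_mul]

theorem sqrt_of_set_J_general (K : Set ℂ)
    (m : ℕ) (h : zpowMap K m ∈ closure (Jx K 0)) :
    zpowMap (sqrtSet K) (2 * m) ∈ closure (Jx (sqrtSet K) 0) := by
  have hsq : ∀ z, (sqrtSetSq K z : ℂ) = (Polynomial.X ^ 2 : Polynomial ℂ).eval (z : ℂ) := by
    simp [sqrtSetSq]
  have hJ := mapsTo_comp_closure_Jx (sqrtSetSq K) _ hsq 0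
  rw [Polynomial.eval_pow, Polynomial.eval_X, zero_pow two_ne_zero] at hJ
  rw [← zpowMap_comp_sqrtSetSq]
  exact hJ h

/-- Theorem 1.7(a): if `z^m ∈ cl J_0(R(K))`, then `z^{2m} ∈ cl J_0(R(√K))`. -/
theorem sqrt_of_set_J (K : Set ℂ) (hK : IsCompact K) (h0 : (0 : ℂ) ∈ K)
    (m : ℕ) (hm : 1 ≤ m) (h : zpowMap K m ∈ closure (Jx K 0)) :
    zpowMap (sqrtSet K) (2 * m) ∈ closure (Jx (sqrtSet K) 0) :=
  sqrt_of_set_J_general K m h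

end
end

section
/- Let K be a compact plane set containing the origin and let m ∈ ℕ. If the closure of J_0(R(K)) contains the ideal power M_0(R(K))^m, then the closure of J_0(R(√K)) contains M_0(R(√K))^{2m}. -/
open scoped ENNReal
open Metric Set Filter

noncomputable section

/-!
Squaring maps `√K` onto `K`, and composition with it identifies `R(K)` isometrically with the
even functions in `R(√K)`: the even part of a rational function with poles off `√K` is a rational
function of `z²` with poles off `K`, and the isometric image of `R(K)` is closed. For
`f, g ∈ M_0(R(√K))` split `f = f₊ + f₋` and `g = g₊ + g₋` into even and odd parts; then
`fg = f₊ g + f₋ g₊ + f₋ g₋` and `f₋ g₋` is even, so `M_0(R(√K))²` lies in the ideal generated by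
the pullback of `M_0(R(K))`. Hence `M_0(R(√K))^{2m}` lies in the ideal generated by the pullback of
`M_0(R(K))^m ⊆ cl J_0(R(K))`, and pulling back by `z ↦ z²` preserves functions vanishing near `0`.
-/

open Polynomial

theorem Polynomial.exists_eval_add_eval_neg {R : Type*} [CommRing R] (P : R[X]) :
    ∃ Q : R[X], ∀ z, P.eval z + P.eval (-z) = Q.eval (z ^ 2) := by
  induction P using Polynomial.induction_on' with
  | add p q hp hq =>
    obtain ⟨a, ha⟩ := hp
    obtain ⟨b, hb⟩ := hq
    exact ⟨a + b, fun z => by simp only [eval_add, ← ha, ← hb]; ring⟩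
  | monomial n c =>
    rcases Nat.even_or_odd n with hn | hn
    · obtain ⟨k, rfl⟩ := hn
      exact ⟨monomial k (2 * c), fun z => by simp [Even.neg_pow ⟨k, rfl⟩, ← pow_mul]; ring_nf⟩
    · exact ⟨0, fun z => by simp [hn.neg_pow]⟩

theorem Ideal.mul_self_le_of_involutive {A : Type*} [CommRing A] [Invertible (2 : A)]
    {ν : A →+* A} (hν : Function.Involutive ν) {I J : Ideal A} (hI : ∀ a ∈ I, ν a ∈ I)
    (hJ : ∀ a ∈ I, ν a = a → a ∈ J) : I * I ≤ J := by
  have hν_half : ν (⅟2) = ⅟2 := by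
    refine (invOf_eq_left_inv ?_).symm
    simpa only [map_mul, map_ofNat, map_one] using congrArg ν (invOf_mul_self (2 : A))
  set even : A → A := fun a => ⅟2 * (a + ν a)
  set odd : A → A := fun a => ⅟2 * (a - ν a)
  have h_even : ∀ a, ν (even a) = even a := fun a => by simp [even, hν_half, hν a, add_comm]
  have h_odd : ∀ a, ν (odd a) = -odd a := fun a => by
    simp only [odd, map_mul, map_sub, hν_half, hν a]; ring
  have h_split : ∀ a, a = even a + odd a := fun a => by
    simp only [even, odd]; linear_combination a * (invOf_mul_self (2 : A)).symm
  refine Ideal.mul_le.2 fun a ha b hb => ?_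
  have h_evenI : ∀ a ∈ I, even a ∈ I := fun a ha => I.mul_mem_left _ (I.add_mem ha (hI a ha))
  have h_oddI : ∀ a ∈ I, odd a ∈ I := fun a ha => I.mul_mem_left _ (I.sub_mem ha (hI a ha))
  have h_ab : a * b = even a * b + odd a * even b + odd a * odd b := by
    linear_combination b * h_split a + odd a * h_split b
  rw [h_ab]
  refine J.add_mem (J.add_mem ?_ ?_) ?_
  · exact J.mul_mem_right _ (hJ _ (h_evenI a ha) (h_even a))
  · exact J.mul_mem_left _ (hJ _ (h_evenI b hb) (h_even b))
  · exact hJ _ (I.mul_mem_right _ (h_oddI a ha)) (by rw [map_mul, h_odd, h_odd, neg_mul_neg])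

theorem ContinuousMap.isometry_comp_of_surjective {X Y E : Type*} [TopologicalSpace X]
    [CompactSpace X] [TopologicalSpace Y] [CompactSpace Y] [NormedAddCommGroup E] {g : C(X, Y)}
    (hg : Function.Surjective g) : Isometry fun f : C(Y, E) => f.comp g := by
  refine Isometry.of_dist_eq fun f f' => ?_
  simp only [dist_eq_norm, ContinuousMap.norm_eq_iSup_norm]
  exact hg.iSup_comp fun y => ‖(f - f') y‖

section RationalAlgebra

variable (K : Set ℂ)

def R0Subalgebra : Subalgebra ℂ C(K, ℂ) where
  carrier := R0 K
  add_mem' := by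
    rintro f g ⟨p, q, hq, hf⟩ ⟨p', q', hq', hg⟩
    refine ⟨p * q' + p' * q, q * q', fun z hz => by simp [hq z hz, hq' z hz], fun z => ?_⟩
    simp only [ContinuousMap.add_apply, hf, hg, eval_add, eval_mul]
    rw [div_add_div _ _ (hq z z.2) (hq' z z.2), mul_comm (eval _ q)]
  mul_mem' := by
    rintro f g ⟨p, q, hq, hf⟩ ⟨p', q', hq', hg⟩
    refine ⟨p * p', q * q', fun z hz => by simp [hq z hz, hq' z hz], fun z => ?_⟩
    simp only [ContinuousMap.mul_apply, hf, hg, eval_mul, div_mul_div_comm]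
  algebraMap_mem' c := ⟨C c, 1, by simp, fun z => by simp⟩

variable [CompactSpace K]

def RKSubalgebra : Subalgebra ℂ C(K, ℂ) := (R0Subalgebra K).topologicalClosure

def Mideal (x : ℂ) : Ideal (RKSubalgebra K) where
  carrier := {f | (f : C(K, ℂ)) ∈ Mx K x}
  add_mem' {f g} hf hg := ⟨(f + g).2, fun h => by simp [hf.2 h, hg.2 h]⟩
  zero_mem' := ⟨(0 : RKSubalgebra K).2, fun _ => rfl⟩
  smul_mem' c f hf := ⟨(c * f).2, fun h => by simp [hf.2 h]⟩

def Jideal (x : ℂ) : Ideal (RKSubalgebra K) where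
  carrier := {f | (f : C(K, ℂ)) ∈ Jx K x}
  add_mem' {f g} := by
    rintro ⟨-, U, hU, hxU, hf⟩ ⟨-, V, hV, hxV, hg⟩
    exact ⟨(f + g).2, U ∩ V, hU.inter hV, ⟨hxU, hxV⟩, fun z hz => by simp [hf z hz.1, hg z hz.2]⟩
  zero_mem' := ⟨(0 : RKSubalgebra K).2, univ, isOpen_univ, trivial, fun _ _ => rfl⟩
  smul_mem' c f := by
    rintro ⟨-, U, hU, hxU, hf⟩
    exact ⟨(c * f).2, U, hU, hxU, fun z hz => by simp [hf z hz]⟩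

variable {K}

theorem mem_Mideal {x : ℂ} {f : RKSubalgebra K} : f ∈ Mideal K x ↔ (f : C(K, ℂ)) ∈ Mx K x :=
  Iff.rfl

theorem mem_Jideal {x : ℂ} {f : RKSubalgebra K} : f ∈ Jideal K x ↔ (f : C(K, ℂ)) ∈ Jx K x :=
  Iff.rfl

theorem image_val_Mideal (x : ℂ) : Subtype.val '' (Mideal K x : Set (RKSubalgebra K)) = Mx K x := by
  ext f
  exact ⟨by rintro ⟨f, hf, rfl⟩; exact mem_Mideal.1 hf, fun hf => ⟨⟨f, hf.1⟩, mem_Mideal.2 hf, rfl⟩⟩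

theorem image_val_closure_Jideal (x : ℂ) :
    Subtype.val '' ((Jideal K x).closure : Set (RKSubalgebra K)) = closure (Jx K x) := by
  have hJ : Subtype.val '' (Jideal K x : Set (RKSubalgebra K)) = Jx K x := by
    ext f
    exact ⟨by rintro ⟨f, hf, rfl⟩; exact mem_Jideal.1 hf,
      fun hf => ⟨⟨f, hf.1⟩, mem_Jideal.2 hf, rfl⟩⟩
  rw [Ideal.coe_closure, ← hJ]
  exact ((R0Subalgebra K).isClosed_topologicalClosure.isClosedEmbedding_subtypeVal.closure_image_eq
    _).symm

end RationalAlgebra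

section IdealPow

variable {K : Set ℂ} [CompactSpace K]

theorem idealPow_image_val_subset (I : Ideal (RKSubalgebra K)) (n : ℕ) :
    idealPow (Subtype.val '' (I : Set (RKSubalgebra K))) n ⊆
      Subtype.val '' ((I ^ n : Ideal (RKSubalgebra K)) : Set (RKSubalgebra K)) := by
  rintro f ⟨N, g, hg, rfl⟩
  choose g' hg'I hg'eq using hg
  refine ⟨∑ i, ∏ j, g' i j, Ideal.sum_mem _ fun i _ => ?_, by simp [hg'eq]⟩
  simpa using Ideal.prod_mem_prod (s := Finset.univ) (I := fun _ => I) fun j _ => hg'I i j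

theorem pow_le_of_idealPow_subset {I J : Ideal (RKSubalgebra K)} {n : ℕ}
    (h : idealPow (Subtype.val '' (I : Set (RKSubalgebra K))) n ⊆
      Subtype.val '' (J : Set (RKSubalgebra K))) :
    I ^ n ≤ J := by
  rw [Submodule.pow_eq_span_pow_set, Ideal.span_le]
  intro f hf
  obtain ⟨g, rfl⟩ := Set.mem_pow.1 hf
  have hg : (((List.ofFn fun i => (g i : RKSubalgebra K)).prod : RKSubalgebra K) : C(K, ℂ)) ∈
      idealPow (Subtype.val '' (I : Set (RKSubalgebra K))) n :=
    ⟨1, fun _ j => g j, fun _ j => ⟨g j, (g j).2, rfl⟩, by simp [List.prod_ofFn]⟩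
  obtain ⟨f', hf', hf'eq⟩ := h hg
  rwa [← Subtype.val_injective hf'eq]

end IdealPow

section PolynomialMaps

variable {K L : Set ℂ} (P : ℂ[X]) (hP : MapsTo (fun z => P.eval z) L K)

def polyMap : C(L, K) :=
  ⟨fun z => ⟨P.eval z, hP z.2⟩, (P.continuous.comp continuous_subtype_val).subtype_mk _⟩

@[simp]
theorem coe_polyMap_apply (z : L) : (polyMap P hP z : ℂ) = P.eval (z : ℂ) :=
  rfl

theorem comp_polyMap_mem_R0 {f : C(K, ℂ)} (hf : f ∈ R0 K) : f.comp (polyMap P hP) ∈ R0 L := by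
  obtain ⟨p, q, hq, hf⟩ := hf
  exact ⟨p.comp P, q.comp P, fun z hz => by simpa using hq _ (hP hz),
    fun z => by rw [ContinuousMap.comp_apply, hf, eval_comp, eval_comp]; rfl⟩

theorem comp_polyMap_mem_RK {f : C(K, ℂ)} (hf : f ∈ RK K) : f.comp (polyMap P hP) ∈ RK L :=
  map_mem_closure (f := fun g : C(K, ℂ) => g.comp (polyMap P hP))
    (ContinuousMap.continuous_precomp _) hf fun _ => comp_polyMap_mem_R0 P hP

variable [CompactSpace K] [CompactSpace L]

def compPoly : RKSubalgebra K →ₐ[ℂ] RKSubalgebra L :=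
  ((ContinuousMap.compStarAlgHom' ℂ ℂ (polyMap P hP)).toAlgHom.comp
    (RKSubalgebra K).val).codRestrict _ fun f => comp_polyMap_mem_RK P hP f.2

@[simp]
theorem coe_compPoly (f : RKSubalgebra K) :
    (compPoly P hP f : C(L, ℂ)) = (f : C(K, ℂ)).comp (polyMap P hP) :=
  rfl

theorem continuous_compPoly : Continuous (compPoly P hP) :=
  ((ContinuousMap.continuous_precomp _).comp continuous_subtype_val).subtype_mk _

theorem compPoly_mem_Mideal_iff {x y : ℂ} (hxy : P.eval x = y) (hy : y ∈ K → x ∈ L)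
    {f : RKSubalgebra K} : compPoly P hP f ∈ Mideal L x ↔ f ∈ Mideal K y := by
  subst hxy
  exact ⟨fun hf => ⟨f.2, fun h => hf.2 (hy h)⟩,
    fun hf => ⟨(compPoly P hP f).2, fun h => hf.2 (hP h)⟩⟩

theorem map_compPoly_closure_Jideal_le {x y : ℂ} (hxy : P.eval x = y) :
    (Jideal K y).closure.map (compPoly P hP) ≤ (Jideal L x).closure := by
  subst hxy
  refine Ideal.map_le_iff_le_comap.2 fun f hf =>
    map_mem_closure (continuous_compPoly P hP) hf fun g hg => ?_
  obtain ⟨-, U, hU, hxU, hgU⟩ := mem_Jideal.1 hg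
  exact ⟨(compPoly P hP g).2, (fun z => P.eval z) ⁻¹' U, hU.preimage P.continuous, hxU,
    fun z hz => hgU (polyMap P hP z) hz⟩

end PolynomialMaps

section SquareRoot

variable {K : Set ℂ}

theorem isCompact_sqrtSet (hK : IsCompact K) : IsCompact (sqrtSet K) := by
  obtain ⟨C, hC⟩ := hK.isBounded.subset_closedBall 0
  refine Metric.isCompact_of_isClosed_isBounded (hK.isClosed.preimage (continuous_pow 2)) ?_
  refine (isBounded_closedBall (x := 0) (r := max 1 C)).subset fun z hz => ?_
  have hz : ‖z‖ ^ 2 ≤ C := by simpa [norm_pow] using hC hz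
  rw [mem_closedBall_zero_iff]
  nlinarith [le_max_left 1 C, le_max_right 1 C]

instance [CompactSpace K] : CompactSpace (sqrtSet K) :=
  isCompact_iff_compactSpace.1 (isCompact_sqrtSet (isCompact_iff_compactSpace.2 ‹_›))

theorem mapsTo_sq_sqrtSet : MapsTo (fun z => (X ^ 2 : ℂ[X]).eval z) (sqrtSet K) K :=
  fun z (hz : z ^ 2 ∈ K) => by simpa using hz

theorem neg_mem_sqrtSet {z : ℂ} (hz : z ∈ sqrtSet K) : -z ∈ sqrtSet K := by
  simpa [sqrtSet] using hz

theorem mapsTo_neg_sqrtSet : MapsTo (fun z => (-X : ℂ[X]).eval z) (sqrtSet K) (sqrtSet K) :=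
  fun z hz => by simpa using neg_mem_sqrtSet hz

variable (K) in
abbrev sqMap : C(sqrtSet K, K) := polyMap (X ^ 2) mapsTo_sq_sqrtSet

variable (K) in
abbrev negMap : C(sqrtSet K, sqrtSet K) := polyMap (-X) mapsTo_neg_sqrtSet

theorem exists_mem_sqrtSet_sq_eq {w : ℂ} (hw : w ∈ K) : ∃ z ∈ sqrtSet K, z ^ 2 = w := by
  obtain ⟨z, hz⟩ := IsAlgClosed.exists_pow_nat_eq w two_pos
  exact ⟨z, show z ^ 2 ∈ K by rwa [hz], hz⟩

theorem sqMap_surjective : Function.Surjective (sqMap K) := by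
  rintro ⟨w, hw⟩
  obtain ⟨z, hz, rfl⟩ := exists_mem_sqrtSet_sq_eq hw
  exact ⟨⟨z, hz⟩, Subtype.ext (by simp [polyMap])⟩

theorem evenPart_mem_image_R0 {r : C(sqrtSet K, ℂ)} (hr : r ∈ R0 (sqrtSet K)) :
    (2⁻¹ : ℂ) • (r + r.comp (negMap K)) ∈ (fun F : C(K, ℂ) => F.comp (sqMap K)) '' R0 K := by
  obtain ⟨p, q, hq, hr⟩ := hr
  obtain ⟨a, ha⟩ := exists_eval_add_eval_neg (p * q.comp (-X))
  obtain ⟨b, hb⟩ := exists_eval_add_eval_neg (q * q.comp (-X))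
  have hb_sq : ∀ z, b.eval (z ^ 2) = 2 * (q.eval z * q.eval (-z)) := fun z => by
    rw [← hb]; simp; ring
  have hbK : ∀ w ∈ K, b.eval w ≠ 0 := by
    intro w hw
    obtain ⟨z, hz, rfl⟩ := exists_mem_sqrtSet_sq_eq hw
    rw [hb_sq]
    exact mul_ne_zero two_ne_zero (mul_ne_zero (hq z hz) (hq (-z) (neg_mem_sqrtSet hz)))
  refine ⟨⟨fun w => a.eval (w : ℂ) / b.eval (w : ℂ), (a.continuous.comp continuous_subtype_val).div
    (b.continuous.comp continuous_subtype_val) fun w => hbK w w.2⟩, ⟨a, b, hbK, fun w => rfl⟩,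
    ContinuousMap.ext fun z => ?_⟩
  have hq₁ := hq z z.2
  have hq₂ := hq _ (neg_mem_sqrtSet z.2)
  simp only [ContinuousMap.comp_apply, ContinuousMap.coe_mk, ContinuousMap.smul_apply,
    ContinuousMap.add_apply, smul_eq_mul, hr, coe_polyMap_apply, eval_pow, eval_neg, eval_X]
  rw [← ha, hb_sq]
  simp only [eval_mul, eval_comp, eval_neg, eval_X, neg_neg]
  field_simp

variable (K) [CompactSpace K]

abbrev sqPullback : RKSubalgebra K →ₐ[ℂ] RKSubalgebra (sqrtSet K) :=
  compPoly (X ^ 2) mapsTo_sq_sqrtSet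

abbrev negPullback : RKSubalgebra (sqrtSet K) →ₐ[ℂ] RKSubalgebra (sqrtSet K) :=
  compPoly (-X) mapsTo_neg_sqrtSet

variable {K}

theorem exists_sqPullback_eq_of_negPullback_eq {f : RKSubalgebra (sqrtSet K)}
    (hf : negPullback K f = f) : ∃ F, sqPullback K F = f := by
  set evenPart : C(sqrtSet K, ℂ) → C(sqrtSet K, ℂ) :=
    fun g => (2⁻¹ : ℂ) • (g + g.comp (negMap K))
  have h_cont : Continuous evenPart :=
    (continuous_id.add (ContinuousMap.continuous_precomp (negMap K))).const_smul (2⁻¹ : ℂ)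
  have h_emb := (ContinuousMap.isometry_comp_of_surjective (E := ℂ)
    (sqMap_surjective (K := K))).isClosedEmbedding
  have h_even : evenPart f ∈ (fun F : C(K, ℂ) => F.comp (sqMap K)) '' RK K := by
    rw [RK, ← h_emb.closure_image_eq]
    exact map_mem_closure h_cont f.2 fun r hr => evenPart_mem_image_R0 hr
  have h_fixed : evenPart f = f := by
    have h_neg : (f : C(sqrtSet K, ℂ)).comp (negMap K) = f := congrArg Subtype.val hf
    simp only [evenPart, h_neg, ← two_smul ℂ, smul_smul]
    norm_num
  rw [h_fixed] at h_even
  obtain ⟨F, hF, hFf⟩ := h_even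
  exact ⟨⟨F, hF⟩, Subtype.ext hFf⟩

theorem sq_Mideal_sqrtSet_le_map : Mideal (sqrtSet K) 0 ^ 2 ≤ (Mideal K 0).map (sqPullback K) := by
  let _ : Invertible (2 : RKSubalgebra (sqrtSet K)) :=
    (Invertible.map (algebraMap ℂ _) 2).copy 2 (map_ofNat _ 2).symm
  rw [sq]
  refine Ideal.mul_self_le_of_involutive (ν := (negPullback K : _ →+* _)) (fun f => ?_)
    (fun f hf => ?_) (fun f hf hfix => ?_)
  · ext z
    simp only [AlgHom.coe_toRingHom, coe_compPoly, ContinuousMap.comp_apply]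
    congr 1
    ext
    simp
  · exact (compPoly_mem_Mideal_iff (-X) mapsTo_neg_sqrtSet (by simp) id).2 hf
  · obtain ⟨F, rfl⟩ := exists_sqPullback_eq_of_negPullback_eq hfix
    exact Ideal.mem_map_of_mem _ ((compPoly_mem_Mideal_iff (X ^ 2) mapsTo_sq_sqrtSet (by simp)
      fun h => by simpa [sqrtSet] using h).1 hf)

end SquareRoot

theorem sqrt_of_set_ideals_general (K : Set ℂ) (hK : IsCompact K)
    (m : ℕ) (h : idealPow (Mx K 0) m ⊆ closure (Jx K 0)) :
    idealPow (Mx (sqrtSet K) 0) (2 * m) ⊆ closure (Jx (sqrtSet K) 0) := by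
  have := isCompact_iff_compactSpace.1 hK
  rw [← image_val_Mideal, ← image_val_closure_Jideal] at h ⊢
  have h_pow : Mideal (sqrtSet K) 0 ^ (2 * m) ≤ (Jideal (sqrtSet K) 0).closure :=
    calc Mideal (sqrtSet K) 0 ^ (2 * m) = (Mideal (sqrtSet K) 0 ^ 2) ^ m := pow_mul _ _ _
      _ ≤ (Mideal K 0).map (sqPullback K) ^ m := Ideal.pow_right_mono sq_Mideal_sqrtSet_le_map m
      _ = (Mideal K 0 ^ m).map (sqPullback K) := (Ideal.map_pow _ _ _).symm
      _ ≤ (Jideal K 0).closure.map (sqPullback K) := Ideal.map_mono (pow_le_of_idealPow_subset h)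
      _ ≤ (Jideal (sqrtSet K) 0).closure := map_compPoly_closure_Jideal_le _ _ (by simp)
  exact (idealPow_image_val_subset _ _).trans (Set.image_mono h_pow)

/-- Theorem 1.7(b): if `cl J_0(R(K)) ⊇ M_0(R(K))^m`, then
`cl J_0(R(√K)) ⊇ M_0(R(√K))^{2m}`. -/
theorem sqrt_of_set_ideals (K : Set ℂ) (hK : IsCompact K) (h0 : (0 : ℂ) ∈ K)
    (m : ℕ) (hm : 1 ≤ m) (h : idealPow (Mx K 0) m ⊆ closure (Jx K 0)) :
    idealPow (Mx (sqrtSet K) 0) (2 * m) ⊆ closure (Jx (sqrtSet K) 0) :=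
  sqrt_of_set_ideals_general K hK m h

end
end

section
/- Let 𝒟 be a nonempty family of open discs each intersecting the open unit disc 𝔻, set K = 𝔻̄ \ ⋃_{D∈𝒟} D, and suppose 0 ∈ K. Let m ∈ ℕ and suppose 𝒟 satisfies the Browder condition of order m at 0. Then there exists a family 𝒟̃ of open discs such that: (a) 0 ∈ 𝔻̄ \ ⋃_{D̃∈𝒟̃} D̃ ⊆ √K; (b) 𝒟̃ satisfies the Browder condition of order 2m at 0; and (c) the 2m-th order Browder sum for 𝒟̃ at 0 is strictly less than the m-th order Browder sum for 𝒟 at 0. -/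
open scoped ENNReal
open Metric Set Filter

noncomputable section

/-!
Each disc is `D(b², ρ)` with `0 < ρ < ‖b‖²`, since `0 ∉ D` and a disc whose boundary passes
through `0` has an infinite Browder term at `0`. Replace it by the two discs `D(±b, r)`, where
`r = ‖b‖ - q` and `q = √(‖b‖² - ρ)`.
If `z² ∈ D(b², ρ)` then `‖z - b‖ ‖z + b‖ < ρ` while `‖z - b‖ + ‖z + b‖ ≥ 2‖b‖`; two numbers `≥ r`
with sum `≥ 2‖b‖` have product `≥ r (2‖b‖ - r) = ρ`, so `z` lies in one of the new discs.
The new discs have `s_0 = q` and the old one `s_0 = q²`, so the two new terms of order `2m` add up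
to `2 (‖b‖ - q) / q^(2m+1)`, which is less than the old term `(‖b‖² - q²) / q^(2m+2)`
because `2q < ‖b‖ + q`.
-/

theorem mem_ball_or_mem_ball_neg_of_sq_mem_ball {𝕜 : Type*} [RCLike 𝕜] {b z : 𝕜} {ρ : ℝ}
    (hρ : ρ ≤ ‖b‖ ^ 2) (hz : z ^ 2 ∈ ball (b ^ 2) ρ) :
    z ∈ ball b (‖b‖ - √(‖b‖ ^ 2 - ρ)) ∨ z ∈ ball (-b) (‖b‖ - √(‖b‖ ^ 2 - ρ)) := by
  set q := √(‖b‖ ^ 2 - ρ)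
  have hq : q ^ 2 = ‖b‖ ^ 2 - ρ := Real.sq_sqrt (sub_nonneg.2 hρ)
  have hρ₀ : 0 < ρ := pos_of_mem_ball hz
  have hqb : q ≤ ‖b‖ := by nlinarith [Real.sqrt_nonneg (‖b‖ ^ 2 - ρ), norm_nonneg b]
  have hprod : ‖z - b‖ * ‖z + b‖ < ρ := by
    rw [← norm_mul, show (z - b) * (z + b) = z ^ 2 - b ^ 2 by ring, ← dist_eq_norm]
    exact hz
  have htri : 2 * ‖b‖ ≤ ‖z - b‖ + ‖z + b‖ := by
    calc 2 * ‖b‖ = ‖(z + b) - (z - b)‖ := by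
          rw [add_sub_sub_cancel, ← two_mul, norm_mul, RCLike.norm_two]
      _ ≤ ‖z + b‖ + ‖z - b‖ := norm_sub_le _ _
      _ = _ := add_comm _ _
  by_contra! h
  simp only [mem_ball, dist_eq_norm, sub_neg_eq_add, not_lt] at h
  obtain ⟨h₁, h₂⟩ := h
  nlinarith [mul_nonneg (sub_nonneg.2 h₁) (sub_nonneg.2 h₂)]

theorem browderTerm_eq_top {a c : ℂ} {ρ : ℝ} (hρ : 0 < ρ) (h : dist a c = ρ) (m : ℕ) :
    browderTerm a c ρ m = ⊤ := by
  rw [browderTerm, h, sub_self, abs_zero, zero_pow m.succ_ne_zero, ENNReal.ofReal_zero,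
    ENNReal.div_zero (ENNReal.ofReal_pos.2 hρ).ne']

theorem browderTerm_eq_ofReal {a c : ℂ} {ρ : ℝ} (h : dist a c ≠ ρ) (m : ℕ) :
    browderTerm a c ρ m = ENNReal.ofReal (ρ / |dist a c - ρ| ^ (m + 1)) := by
  rw [browderTerm, ENNReal.ofReal_div_of_pos (pow_pos (abs_pos.2 (sub_ne_zero.2 h)) _)]

theorem browderTerm_self_one (a : ℂ) (m : ℕ) : browderTerm a a 1 m = 1 := by
  simp [browderTerm]

theorem browderTerm_zero_neg (c : ℂ) (ρ : ℝ) (m : ℕ) :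
    browderTerm 0 (-c) ρ m = browderTerm 0 c ρ m := by
  simp [browderTerm]

theorem dist_ne_of_browderSum_ne_top {ι : Type*} {c : ι → ℂ} {ρ : ι → ℝ} {a : ℂ} {m : ℕ}
    (hB : browderSum c ρ a m ≠ ⊤) {i : ι} (hρ : 0 < ρ i) : dist a (c i) ≠ ρ i := fun h =>
  hB <| eq_top_mono (le_add_left (ENNReal.le_tsum i)) (browderTerm_eq_top hρ h m)

theorem two_mul_div_pow_lt {p q : ℝ} (hq : 0 < q) (hqp : q < p) (m : ℕ) :
    2 * ((p - q) / q ^ (2 * m + 1)) < (p ^ 2 - q ^ 2) / (q ^ 2) ^ (m + 1) := by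
  have hpow : (q ^ 2) ^ (m + 1) = q ^ (2 * m + 1) * q := by ring
  rw [hpow, mul_div_assoc', div_lt_div_iff₀ (by positivity) (by positivity)]
  have : 0 < q ^ (2 * m + 1) * (p - q) ^ 2 := by have := sub_pos.2 hqp; positivity
  nlinarith

theorem two_mul_browderTerm_sqrt_lt {b : ℂ} {ρ : ℝ} (hρ : 0 < ρ) (hρb : ρ < ‖b‖ ^ 2) (m : ℕ) :
    2 * browderTerm 0 b (‖b‖ - √(‖b‖ ^ 2 - ρ)) (2 * m) < browderTerm 0 (b ^ 2) ρ m := by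
  set q := √(‖b‖ ^ 2 - ρ)
  have hq : 0 < q := Real.sqrt_pos.2 (sub_pos.2 hρb)
  have hq2 : q ^ 2 = ‖b‖ ^ 2 - ρ := Real.sq_sqrt (sub_pos.2 hρb).le
  have hqb : q < ‖b‖ := by nlinarith [norm_nonneg b]
  have hd : dist 0 b = ‖b‖ := by rw [dist_comm, dist_zero_right]
  have hd2 : dist 0 (b ^ 2) = ‖b‖ ^ 2 := by rw [dist_comm, dist_zero_right, norm_pow]
  rw [browderTerm_eq_ofReal (by rw [hd]; linarith), browderTerm_eq_ofReal (by rw [hd2]; linarith),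
    hd, hd2, show ‖b‖ - (‖b‖ - q) = q by ring, abs_of_pos hq,
    show ‖b‖ ^ 2 - ρ = q ^ 2 by rw [hq2], abs_of_pos (pow_pos hq 2),
    show ρ = ‖b‖ ^ 2 - q ^ 2 by rw [hq2]; ring, ← ENNReal.ofReal_ofNat 2,
    ← ENNReal.ofReal_mul zero_le_two,
    ENNReal.ofReal_lt_ofReal_iff (div_pos (by linarith) (by positivity))]
  exact two_mul_div_pow_lt hq hqb m

section SqrtDiscs

variable {ι : Type*} (b : ι → ℂ) (ρ : ι → ℝ)

def sqrtDiscCenter (x : ι × Bool) : ℂ := cond x.2 (b x.1) (-b x.1)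

def sqrtDiscRadius (x : ι × Bool) : ℝ := ‖b x.1‖ - √(‖b x.1‖ ^ 2 - ρ x.1)

variable {b ρ}

theorem sqrtDiscRadius_pos (hρ : ∀ i, 0 < ρ i) (hρb : ∀ i, ρ i ≤ ‖b i‖ ^ 2) (x : ι × Bool) :
    0 < sqrtDiscRadius b ρ x := by
  have h := hρ x.1
  have hb : 0 < ‖b x.1‖ := by nlinarith [hρb x.1, norm_nonneg (b x.1)]
  exact sub_pos.2 ((Real.sqrt_lt' hb).2 (by linarith))

theorem zero_notMem_iUnion_ball_sqrtDisc :
    (0 : ℂ) ∉ ⋃ x, ball (sqrtDiscCenter b x) (sqrtDiscRadius b ρ x) := by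
  simp only [mem_iUnion, mem_ball, not_exists, not_lt]
  rintro ⟨i, _ | _⟩ <;>
    simp [sqrtDiscCenter, sqrtDiscRadius, dist_comm (0 : ℂ), Real.sqrt_nonneg]

theorem sq_notMem_ball_of_notMem_iUnion_ball_sqrtDisc (hρb : ∀ i, ρ i ≤ ‖b i‖ ^ 2) {z : ℂ}
    (hz : z ∉ ⋃ x, ball (sqrtDiscCenter b x) (sqrtDiscRadius b ρ x)) (i : ι) :
    z ^ 2 ∉ ball (b i ^ 2) (ρ i) := fun hzi => hz <| mem_iUnion.2 <|
  (mem_ball_or_mem_ball_neg_of_sq_mem_ball (hρb i) hzi).elim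
    (fun h => ⟨(i, true), h⟩) (fun h => ⟨(i, false), h⟩)

theorem browderSum_sqrtDisc_lt [Nonempty ι] (hρ : ∀ i, 0 < ρ i) (hρb : ∀ i, ρ i < ‖b i‖ ^ 2)
    (m : ℕ) (hB : browderSum (fun i => b i ^ 2) ρ 0 m ≠ ⊤) :
    browderSum (sqrtDiscCenter b) (sqrtDiscRadius b ρ) 0 (2 * m)
      < browderSum (fun i => b i ^ 2) ρ 0 m := by
  have hsplit : ∑' x, browderTerm 0 (sqrtDiscCenter b x) (sqrtDiscRadius b ρ x) (2 * m)
      = ∑' i, 2 * browderTerm 0 (b i) (‖b i‖ - √(‖b i‖ ^ 2 - ρ i)) (2 * m) := by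
    rw [ENNReal.tsum_prod']
    refine tsum_congr fun i => ?_
    rw [tsum_fintype, Fintype.sum_bool]
    simp only [sqrtDiscCenter, sqrtDiscRadius, cond_true, cond_false, browderTerm_zero_neg]
    exact (two_mul _).symm
  have hterm i := two_mul_browderTerm_sqrt_lt (hρ i) (hρb i) m
  have htail : ∑' i, browderTerm 0 (b i ^ 2) (ρ i) m ≠ ⊤ :=
    ne_top_of_le_ne_top hB le_add_self
  obtain ⟨i₀⟩ := ‹Nonempty ι›
  rw [browderSum, browderSum, hsplit, browderTerm_self_one, browderTerm_self_one]
  refine ENNReal.add_lt_add_left ENNReal.one_ne_top ?_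
  exact ENNReal.tsum_lt_tsum
    (ne_top_of_le_ne_top htail (ENNReal.tsum_le_tsum fun i => (hterm i).le))
    (fun i => (hterm i).le) (hterm i₀)

end SqrtDiscs

theorem exists_reindex_discFamily {α : Type*} (c : α → ℂ) (ρ : α → ℝ) :
    ∃ (ι : Type) (c' : ι → ℂ) (ρ' : ι → ℝ), (∀ j, ∃ i, c' j = c i ∧ ρ' j = ρ i) ∧
      ⋃ j, ball (c' j) (ρ' j) = ⋃ i, ball (c i) (ρ i) ∧
      ∀ a m, browderSum c' ρ' a m ≤ browderSum c ρ a m := by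
  set f : α → ℂ × ℝ := fun i => (c i, ρ i)
  refine ⟨range f, fun j => j.1.1, fun j => j.1.2, fun j => ?_, ?_, fun a m => ?_⟩
  · obtain ⟨i, hi⟩ := j.2
    exact ⟨i, congrArg Prod.fst hi.symm, congrArg Prod.snd hi.symm⟩
  · ext z
    simp [f]
  · refine add_le_add le_rfl ?_
    calc ∑' j : range f, browderTerm a j.1.1 j.1.2 m
        = ∑' j, browderTerm a (c (rangeSplitting f j)) (ρ (rangeSplitting f j)) m :=
          tsum_congr fun j => by rw [← apply_rangeSplitting f j]
      _ ≤ ∑' i, browderTerm a (c i) (ρ i) m :=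
          ENNReal.tsum_comp_le_tsum_of_injective (rangeSplitting_injective f)
            fun i => browderTerm a (c i) (ρ i) m

theorem sqrt_of_cheese_general {ι : Type*} [Nonempty ι] (c : ι → ℂ) (ρ : ι → ℝ)
    (hρ : ∀ i, 0 < ρ i)
    (K : Set ℂ) (hK : K = closedBall (0 : ℂ) 1 \ ⋃ i, ball (c i) (ρ i))
    (h0 : (0 : ℂ) ∈ K) (m : ℕ)
    (hB : browderSum c ρ 0 m < ⊤) :
    ∃ (ι' : Type) (c' : ι' → ℂ) (ρ' : ι' → ℝ),
      (∀ i, 0 < ρ' i) ∧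
      (0 : ℂ) ∈ closedBall (0 : ℂ) 1 \ ⋃ i, ball (c' i) (ρ' i) ∧
      closedBall (0 : ℂ) 1 \ ⋃ i, ball (c' i) (ρ' i) ⊆ sqrtSet K ∧
      browderSum c' ρ' 0 (2 * m) < ⊤ ∧
      browderSum c' ρ' 0 (2 * m) < browderSum c ρ 0 m := by
  set b : ι → ℂ := fun i => c i ^ (2⁻¹ : ℂ)
  have hb : (fun i => b i ^ 2) = c := funext fun i => Complex.cpow_ofNat_inv_pow (c i) 2
  have hnorm : ∀ i, ‖b i‖ ^ 2 = dist 0 (c i) := fun i => by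
    rw [← norm_pow, ← congrFun hb i, dist_comm, dist_zero_right]
  have hρb : ∀ i, ρ i < ‖b i‖ ^ 2 := fun i => by
    have h0i : 0 ∉ ball (c i) (ρ i) := fun h => (hK ▸ h0).2 (mem_iUnion_of_mem i h)
    rw [hnorm]
    exact lt_of_le_of_ne (not_lt.1 h0i) (dist_ne_of_browderSum_ne_top hB.ne (hρ i)).symm
  obtain ⟨ι', c', ρ', hfam, hunion, hsum⟩ :=
    exists_reindex_discFamily (sqrtDiscCenter b) (sqrtDiscRadius b ρ)
  have hlt : browderSum c' ρ' 0 (2 * m) < browderSum c ρ 0 m := by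
    rw [← hb] at hB ⊢
    exact (hsum 0 _).trans_lt (browderSum_sqrtDisc_lt hρ hρb m hB.ne)
  refine ⟨ι', c', ρ', fun j => ?_, ⟨mem_closedBall_self zero_le_one, ?_⟩, ?_, hlt.trans hB, hlt⟩
  · obtain ⟨x, -, hρx⟩ := hfam j
    exact hρx ▸ sqrtDiscRadius_pos hρ (fun i => (hρb i).le) x
  · exact hunion ▸ zero_notMem_iUnion_ball_sqrtDisc
  · rintro z ⟨hz1, hz2⟩
    show z ^ 2 ∈ K
    rw [hK, ← hb]
    refine ⟨?_, ?_⟩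
    · rw [mem_closedBall_zero_iff, norm_pow]
      exact pow_le_one₀ (norm_nonneg z) (mem_closedBall_zero_iff.1 hz1)
    · simp only [mem_iUnion, not_exists]
      exact sq_notMem_ball_of_notMem_iUnion_ball_sqrtDisc (fun i => (hρb i).le) (hunion ▸ hz2)

/-- Theorem 1.8: taking square roots of a Swiss cheese, halving the Browder order. -/
theorem sqrt_of_cheese {ι : Type*} [Nonempty ι] (c : ι → ℂ) (ρ : ι → ℝ)
    (hρ : ∀ i, 0 < ρ i)
    (hint : ∀ i, (ball (c i) (ρ i) ∩ ball (0 : ℂ) 1).Nonempty)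
    (K : Set ℂ) (hK : K = closedBall (0 : ℂ) 1 \ ⋃ i, ball (c i) (ρ i))
    (h0 : (0 : ℂ) ∈ K) (m : ℕ) (hm : 1 ≤ m)
    (hB : browderSum c ρ 0 m < ⊤) :
    ∃ (ι' : Type) (c' : ι' → ℂ) (ρ' : ι' → ℝ),
      (∀ i, 0 < ρ' i) ∧
      (0 : ℂ) ∈ closedBall (0 : ℂ) 1 \ ⋃ i, ball (c' i) (ρ' i) ∧
      closedBall (0 : ℂ) 1 \ ⋃ i, ball (c' i) (ρ' i) ⊆ sqrtSet K ∧
      browderSum c' ρ' 0 (2 * m) < ⊤ ∧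
      browderSum c' ρ' 0 (2 * m) < browderSum c ρ 0 m :=
  sqrt_of_cheese_general c ρ hρ K hK h0 m hB

end
end

section
/- Let A be a commutative unital complex Banach algebra and let I be a closed ideal in A. Suppose that the quotient I/cl(I²) is one-dimensional as a complex vector space, and let f ∈ I \ cl(I²). Then for all m ∈ ℕ, cl(I^m) = cl(I^{m+1}) + ℂ·f^m; consequently the quotient cl(I^m)/cl(I^{m+1}) has dimension at most 1, and cl(I^m) = cl(I^{m+1}) if and only if f^m ∈ cl(I^{m+1}). -/
/-!
Since `I / cl(I²)` is spanned by the class of `f`, we have `I ⊆ cl(I²) + ℂ f`. Inductively,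
`I^(m+1) = I^m · I ⊆ (cl(I^(m+1)) + ℂ f^m)(cl(I²) + ℂ f) ⊆ cl(I^(m+2)) + ℂ f^(m+1)`, using
`cl(I^j) · cl(I^k) ⊆ cl(I^(j+k))`. The right-hand side is closed, being a closed subspace plus a
finite-dimensional one, so it also contains `cl(I^(m+1))`. The bound on the dimension and the
criterion for `cl(I^m) = cl(I^(m+1))` are read off from `cl(I^m) = cl(I^(m+1)) + ℂ f^m`.
-/

open scoped ENNReal
open Metric Set

noncomputable section

/-- The topological closure of the `m`-th power of an ideal, viewed as a complex
submodule. -/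
def clPow {A : Type*} [NormedCommRing A] [NormedAlgebra ℂ A]
    (I : Ideal A) (m : ℕ) : Submodule ℂ A :=
  ((I ^ m).restrictScalars ℂ).topologicalClosure

/-- There is a nondegenerate bounded point derivation of order `m` at the complex
homomorphism `φ` on `A`. -/
def HasNBPDAlg {A : Type*} [NormedCommRing A] [NormedAlgebra ℂ A]
    (φ : A →ₐ[ℂ] ℂ) (m : ℕ) : Prop :=
  ∃ d : ℕ → (A →ₗ[ℂ] ℂ),
    d 0 = φ.toLinearMap ∧
    (∀ k, 1 ≤ k → k ≤ m → ∀ f g : A,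
      d k (f * g) = ∑ j ∈ Finset.range (k + 1), d j f * d (k - j) g) ∧
    (∀ k ≤ m, Continuous (d k)) ∧
    d 1 ≠ 0

namespace Submodule

variable {K V : Type*} [Field K] [AddCommGroup V] [Module K V] {M N : Submodule K V} {v : V}

theorem le_sup_span_singleton_of_rank_quotient_eq_one (hvM : v ∈ M) (hvN : v ∉ N)
    (h : Module.rank K (M ⧸ N.comap M.subtype) = 1) : M ≤ N ⊔ span K {v} := by
  have hw : (N.comap M.subtype).mkQ ⟨v, hvM⟩ ≠ 0 := by
    simpa [Quotient.mk_eq_zero] using hvN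
  have hfin : Module.finrank K (M ⧸ N.comap M.subtype) = 1 := by
    simp [Module.finrank, h]
  intro x hxM
  obtain ⟨c, hc⟩ := (finrank_eq_one_iff_of_nonzero' _ hw).mp hfin
    ((N.comap M.subtype).mkQ ⟨x, hxM⟩)
  have hxcv : x - c • v ∈ N := by
    simpa [← Quotient.mk_smul, Quotient.eq] using hc.symm
  rw [← sub_add_cancel x (c • v)]
  exact add_mem (mem_sup_left hxcv) (mem_sup_right (smul_mem _ c (mem_span_singleton_self v)))

theorem rank_quotient_le_one_of_le_sup_span_singleton (h : M ≤ N ⊔ span K {v}) :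
    Module.rank K (M ⧸ N.comap M.subtype) ≤ 1 := by
  let g := N.mkQ ∘ₗ M.subtype
  have hker : LinearMap.ker g = N.comap M.subtype := by
    rw [LinearMap.ker_comp, ker_mkQ]
  have hrange : LinearMap.range g ≤ span K {N.mkQ v} := by
    rw [LinearMap.range_comp, range_subtype]
    refine (map_mono h).trans_eq ?_
    rw [map_sup, mkQ_map_self, bot_sup_eq, map_span, Set.image_singleton]
  calc Module.rank K (M ⧸ N.comap M.subtype)
      = Module.rank K (LinearMap.range g) := by
        rw [← hker]; exact g.quotKerEquivRange.rank_eq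
    _ ≤ Module.rank K (span K {N.mkQ v}) := rank_mono hrange
    _ ≤ 1 := by simpa using rank_span_le {N.mkQ v}

end Submodule

section clPow

variable {A : Type*} [NormedCommRing A] [NormedAlgebra ℂ A] {I : Ideal A} {f : A}

theorem clPow_coe (I : Ideal A) (m : ℕ) :
    (clPow I m : Set A) = closure ((I ^ m : Ideal A) : Set A) :=
  Submodule.topologicalClosure_coe _

theorem isClosed_clPow (I : Ideal A) (m : ℕ) : IsClosed (clPow I m : Set A) :=
  Submodule.isClosed_topologicalClosure _

theorem le_clPow (I : Ideal A) (m : ℕ) : (I ^ m).restrictScalars ℂ ≤ clPow I m :=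
  Submodule.le_topologicalClosure _

theorem clPow_antitone (I : Ideal A) : Antitone (clPow I) := fun _ _ hmn =>
  Submodule.topologicalClosure_mono <|
    Submodule.restrictScalars_mono ℂ (Ideal.pow_le_pow_right hmn)

theorem pow_mem_clPow (hf : f ∈ I) (m : ℕ) : f ^ m ∈ clPow I m :=
  le_clPow I m (Ideal.pow_mem_pow hf m)

theorem clPow_mul_clPow_le (I : Ideal A) (j k : ℕ) : clPow I j * clPow I k ≤ clPow I (j + k) := by
  refine Submodule.mul_le.2 fun x hx y hy => ?_
  rw [← SetLike.mem_coe, clPow_coe] at hx hy ⊢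
  refine map_mem_closure₂ continuous_mul hx hy fun a ha b hb => ?_
  rw [pow_add]
  exact Ideal.mul_mem_mul ha hb

theorem sup_span_pow_mul_sup_span_pow_le (hf : f ∈ I) (j k : ℕ) :
    (clPow I (j + 1) ⊔ Submodule.span ℂ {f ^ j}) * (clPow I (k + 1) ⊔ Submodule.span ℂ {f ^ k})
      ≤ clPow I (j + k + 1) ⊔ Submodule.span ℂ {f ^ (j + k)} := by
  have hspan (m : ℕ) : Submodule.span ℂ {f ^ m} ≤ clPow I m :=
    (Submodule.span_singleton_le_iff_mem _ _).2 (pow_mem_clPow hf m)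
  have hmul (a b n : ℕ) (hn : n ≤ a + b) : clPow I a * clPow I b ≤ clPow I n :=
    (clPow_mul_clPow_le I a b).trans (clPow_antitone I hn)
  rw [Submodule.mul_sup, Submodule.sup_mul, Submodule.sup_mul, Submodule.span_mul_span,
    Set.singleton_mul_singleton, ← pow_add]
  refine sup_le (sup_le ?_ ?_) (sup_le ?_ le_sup_right) <;> refine le_sup_of_le_left ?_
  · exact hmul (j + 1) (k + 1) _ (by omega)
  · exact (mul_le_mul' (hspan j) le_rfl).trans (hmul j (k + 1) _ (by omega))
  · exact (mul_le_mul' le_rfl (hspan k)).trans (hmul (j + 1) k _ (by omega))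

theorem clPow_succ_le_sup_span_pow (hf : f ∈ I)
    (hI : I.restrictScalars ℂ ≤ clPow I 2 ⊔ Submodule.span ℂ {f}) (n : ℕ) :
    clPow I (n + 1) ≤ clPow I (n + 2) ⊔ Submodule.span ℂ {f ^ (n + 1)} := by
  refine Submodule.topologicalClosure_minimal _ ?_
    (Submodule.isClosed_sup_finiteDimensional _ _ (isClosed_clPow I _))
  induction n with
  | zero => simpa using hI
  | succ n ih =>
    rw [pow_succ, Ideal.restrictScalars_mul]
    refine (mul_le_mul' ih (by simpa using hI)).trans ?_
    simpa using sup_span_pow_mul_sup_span_pow_le hf (n + 1) 1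

theorem clPow_eq_sup_span_pow (hf : f ∈ I)
    (hI : I.restrictScalars ℂ ≤ clPow I 2 ⊔ Submodule.span ℂ {f}) {m : ℕ} (hm : 1 ≤ m) :
    clPow I m = clPow I (m + 1) ⊔ Submodule.span ℂ {f ^ m} := by
  obtain ⟨n, rfl⟩ := Nat.exists_eq_add_of_le' hm
  refine le_antisymm (clPow_succ_le_sup_span_pow hf hI n)
    (sup_le (clPow_antitone I (n + 1).le_succ) ?_)
  exact (Submodule.span_singleton_le_iff_mem _ _).2 (pow_mem_clPow hf _)

end clPow

theorem codim_one_powers_general {A : Type*} [NormedCommRing A] [NormedAlgebra ℂ A]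
    (I : Ideal A) (f : A) (hf : f ∈ I)
    (hf2 : f ∉ closure ((I ^ 2 : Ideal A) : Set A))
    (hdim : Module.rank ℂ
      (↥(I.restrictScalars ℂ) ⧸
        Submodule.comap (I.restrictScalars ℂ).subtype (clPow I 2)) = 1) :
    ∀ m : ℕ, 1 ≤ m →
      closure ((I ^ m : Ideal A) : Set A)
        = {x : A | ∃ y ∈ closure ((I ^ (m + 1) : Ideal A) : Set A),
            ∃ α : ℂ, x = y + α • f ^ m} ∧
      Module.rank ℂ
        (↥(clPow I m) ⧸ Submodule.comap (clPow I m).subtype (clPow I (m + 1))) ≤ 1 ∧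
      (closure ((I ^ m : Ideal A) : Set A) = closure ((I ^ (m + 1) : Ideal A) : Set A)
        ↔ f ^ m ∈ closure ((I ^ (m + 1) : Ideal A) : Set A)) := by
  rw [← clPow_coe] at hf2
  have hI : I.restrictScalars ℂ ≤ clPow I 2 ⊔ Submodule.span ℂ {f} :=
    Submodule.le_sup_span_singleton_of_rank_quotient_eq_one hf hf2 hdim
  intro m hm
  have hsplit := clPow_eq_sup_span_pow hf hI hm
  simp only [← clPow_coe]
  refine ⟨?_, Submodule.rank_quotient_le_one_of_le_sup_span_singleton hsplit.le, ?_⟩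
  · ext x
    rw [hsplit]
    simp only [SetLike.mem_coe, Submodule.mem_sup, Submodule.mem_span_singleton,
      Set.mem_ofPred_eq, exists_exists_eq_and, @eq_comm _ x]
  · rw [SetLike.coe_set_eq, hsplit, sup_eq_left, Submodule.span_singleton_le_iff_mem,
      SetLike.mem_coe]

/-- Lemma 2.4: if `I` is a closed ideal with `dim(I/cl I²) = 1` and `f ∈ I \ cl I²`,
then `cl(I^m) = cl(I^{m+1}) + ℂ f^m` for all `m ≥ 1`; consequently
`dim(cl I^m / cl I^{m+1}) ≤ 1`, and `cl(I^m) = cl(I^{m+1})` iff `f^m ∈ cl(I^{m+1})`. -/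
theorem codim_one_powers {A : Type*} [NormedCommRing A] [NormedAlgebra ℂ A]
    [CompleteSpace A]
    (I : Ideal A) (hI : IsClosed (I : Set A)) (f : A) (hf : f ∈ I)
    (hf2 : f ∉ closure ((I ^ 2 : Ideal A) : Set A))
    (hdim : Module.rank ℂ
      (↥(I.restrictScalars ℂ) ⧸
        Submodule.comap (I.restrictScalars ℂ).subtype (clPow I 2)) = 1) :
    ∀ m : ℕ, 1 ≤ m →
      closure ((I ^ m : Ideal A) : Set A)
        = {x : A | ∃ y ∈ closure ((I ^ (m + 1) : Ideal A) : Set A),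
            ∃ α : ℂ, x = y + α • f ^ m} ∧
      Module.rank ℂ
        (↥(clPow I m) ⧸ Submodule.comap (clPow I m).subtype (clPow I (m + 1))) ≤ 1 ∧
      (closure ((I ^ m : Ideal A) : Set A) = closure ((I ^ (m + 1) : Ideal A) : Set A)
        ↔ f ^ m ∈ closure ((I ^ (m + 1) : Ideal A) : Set A)) :=
  codim_one_powers_general I f hf hf2 hdim

end
end

section
/- Let A be a commutative unital complex Banach algebra, let M be a maximal ideal in A, let f ∈ M, and suppose that M = cl(fA). Then the quotient M/cl(M²) has dimension at most 1 as a complex vector space; moreover, for all m ∈ ℕ, cl(M^m) = cl(f^m A), and cl(M^m) = cl(M^{m+1}) if and only if f^m ∈ cl(M^{m+1}). -/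
/-!
Since `A ⧸ M ≅ ℂ` (Gelfand–Mazur), every `g` is `c + (g - c)` with `g - c ∈ M`, so
`g f ∈ ℂ f + M²`. Thus `fA` lies in `cl(M²) + ℂ f`, which is closed (closed plus
finite-dimensional), and hence so does `M = cl(fA)`; this bounds `dim M / cl(M²)` by one.
For the powers, `cl(I)^m ⊆ cl(I^m)` gives `M^m ⊆ cl(f^m A)`, and `f^m ∈ M^m` gives the
reverse inclusion; the criterion for `cl(M^m) = cl(M^{m+1})` follows because `f^m` generates a
dense ideal of `cl(M^m)`.
-/

open scoped ENNReal
open Metric Set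

noncomputable section

theorem Submodule.rank_quotient_comap_subtype_le_one {K V : Type*} [DivisionRing K]
    [AddCommGroup V] [Module K V] {p q : Submodule K V} {x : V} (hx : x ∈ p)
    (hp : p ≤ q ⊔ K ∙ x) : Module.rank K (p ⧸ q.comap p.subtype) ≤ 1 := by
  rw [rank_le_one_iff]
  refine ⟨Quotient.mk ⟨x, hx⟩, fun v ↦ ?_⟩
  obtain ⟨⟨y, hy⟩, rfl⟩ := Quotient.mk_surjective _ v
  obtain ⟨n, hn, z, hz, rfl⟩ := mem_sup.mp (hp hy)
  obtain ⟨c, rfl⟩ := mem_span_singleton.mp hz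
  refine ⟨c, ?_⟩
  rw [← Quotient.mk_smul, Quotient.eq, mem_comap]
  simpa using q.neg_mem hn

namespace Ideal

section TopologicalRing

variable {R : Type*} [TopologicalSpace R] [CommRing R] [IsTopologicalRing R]

theorem le_closure (I : Ideal R) : I ≤ I.closure := fun _ hx ↦ subset_closure hx

theorem closure_le_closure_of_le_closure {I J : Ideal R} (h : I ≤ J.closure) :
    I.closure ≤ J.closure :=
  closure_minimal h isClosed_closure

theorem closure_mul_closure_le (I J : Ideal R) : I.closure * J.closure ≤ (I * J).closure :=
  mul_le.mpr fun _ hr _ hs ↦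
    map_mem_closure₂ continuous_mul hr hs fun _ hx _ hy ↦ mul_mem_mul hx hy

theorem closure_pow_le (I : Ideal R) : ∀ n : ℕ, I.closure ^ n ≤ (I ^ n).closure
  | 0 => by simpa only [pow_zero] using le_closure 1
  | n + 1 => by
    rw [pow_succ, pow_succ]
    exact (mul_le_mul' (closure_pow_le I n) le_rfl).trans (closure_mul_closure_le _ _)

variable {M : Ideal R} {f : R}

theorem mem_of_eq_closure_span (hMf : M = (span {f}).closure) : f ∈ M :=
  hMf ▸ le_closure _ (mem_span_singleton_self f)

theorem closure_pow_eq_closure_span_pow (hMf : M = (span {f}).closure) (m : ℕ) :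
    (M ^ m).closure = (span {f ^ m}).closure := by
  refine le_antisymm (closure_le_closure_of_le_closure ?_) (closure_mono ?_)
  · calc M ^ m = (span {f}).closure ^ m := by rw [← hMf]
      _ ≤ (span {f} ^ m).closure := closure_pow_le _ m
      _ = (span {f ^ m}).closure := by rw [span_singleton_pow]
  · exact span_le.mpr (singleton_subset_iff.mpr (pow_mem_pow (mem_of_eq_closure_span hMf) m))

theorem closure_pow_eq_closure_pow_succ_iff (hMf : M = (span {f}).closure) (m : ℕ) :
    (M ^ m).closure = (M ^ (m + 1)).closure ↔ f ^ m ∈ (M ^ (m + 1)).closure := by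
  refine ⟨fun h ↦ h ▸ le_closure _ (pow_mem_pow (mem_of_eq_closure_span hMf) m),
    fun h ↦ ?_⟩
  refine le_antisymm ?_ (closure_mono (pow_le_pow_right m.le_succ))
  rw [closure_pow_eq_closure_span_pow hMf]
  exact closure_le_closure_of_le_closure (span_le.mpr (singleton_subset_iff.mpr h))

end TopologicalRing

theorem mul_mem_sq_sup_span_singleton {𝕜 A : Type*} [CommSemiring 𝕜] [CommRing A]
    [Algebra 𝕜 A] {M : Ideal A} (hres : ∀ g : A, ∃ c : 𝕜, g - algebraMap 𝕜 A c ∈ M)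
    {f : A} (hf : f ∈ M) (g : A) : g * f ∈ (M ^ 2).restrictScalars 𝕜 ⊔ 𝕜 ∙ f := by
  obtain ⟨c, hc⟩ := hres g
  refine Submodule.mem_sup.mpr ⟨(g - algebraMap 𝕜 A c) * f, pow_two M ▸ mul_mem_mul hc hf,
    c • f, Submodule.smul_mem _ c (Submodule.mem_span_singleton_self f), ?_⟩
  rw [Algebra.smul_def]
  ring

theorem restrictScalars_le_closure_sq_sup_span_singleton {𝕜 A : Type*}
    [NontriviallyNormedField 𝕜] [CompleteSpace 𝕜] [NormedCommRing A] [NormedAlgebra 𝕜 A]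
    {M : Ideal A} (hres : ∀ g : A, ∃ c : 𝕜, g - algebraMap 𝕜 A c ∈ M) {f : A}
    (hMf : M = (span {f}).closure) :
    M.restrictScalars 𝕜 ≤ ((M ^ 2).restrictScalars 𝕜).topologicalClosure ⊔ 𝕜 ∙ f := by
  let N := ((M ^ 2).restrictScalars 𝕜).topologicalClosure ⊔ 𝕜 ∙ f
  have hN_closed : IsClosed (N : Set A) := Submodule.isClosed_sup_finiteDimensional _ _
    ((M ^ 2).restrictScalars 𝕜).isClosed_topologicalClosure
  have hspan_le : (span {f} : Set A) ⊆ N := by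
    intro x hx
    obtain ⟨g, rfl⟩ := mem_span_singleton'.mp hx
    exact sup_le_sup_right (Submodule.le_topologicalClosure ((M ^ 2).restrictScalars 𝕜)) _
      (mul_mem_sq_sup_span_singleton hres (mem_of_eq_closure_span hMf) g)
  intro x hx
  rw [hMf] at hx
  exact closure_minimal hspan_le hN_closed hx

theorem IsMaximal.exists_sub_algebraMap_mem {A : Type*} [NormedCommRing A] [NormedAlgebra ℂ A]
    [CompleteSpace A] {M : Ideal A} (hM : M.IsMaximal) (g : A) :
    ∃ c : ℂ, g - algebraMap ℂ A c ∈ M := by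
  let := Quotient.field M
  obtain ⟨c, hc⟩ := (NormedRing.algEquivComplexOfComplete
    (isUnit_iff_ne_zero (G₀ := A ⧸ M))).surjective (Quotient.mk M g)
  refine ⟨c, Quotient.eq.mp ?_⟩
  rw [← hc]
  simp

end Ideal

theorem principal_maximal_ideal_powers_general {A : Type*} [NormedCommRing A]
    [NormedAlgebra ℂ A] [CompleteSpace A]
    (M : Ideal A) (hM : M.IsMaximal) (f : A)
    (hMf : (M : Set A) = closure ((Ideal.span {f} : Ideal A) : Set A)) :
    Module.rank ℂ
      (↥(M.restrictScalars ℂ) ⧸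
        Submodule.comap (M.restrictScalars ℂ).subtype (clPow M 2)) ≤ 1 ∧
    ∀ m : ℕ, 1 ≤ m →
      closure ((M ^ m : Ideal A) : Set A)
        = closure ((Ideal.span {f ^ m} : Ideal A) : Set A) ∧
      (closure ((M ^ m : Ideal A) : Set A) = closure ((M ^ (m + 1) : Ideal A) : Set A)
        ↔ f ^ m ∈ closure ((M ^ (m + 1) : Ideal A) : Set A)) := by
  have hM_closure : M = (Ideal.span {f}).closure := SetLike.ext' hMf
  have hcodim := Ideal.restrictScalars_le_closure_sq_sup_span_singleton
    hM.exists_sub_algebraMap_mem hM_closure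
  refine ⟨Submodule.rank_quotient_comap_subtype_le_one (Ideal.mem_of_eq_closure_span hM_closure)
    hcodim, fun m _ ↦ ⟨?_, ?_⟩⟩
  · exact congrArg SetLike.coe (Ideal.closure_pow_eq_closure_span_pow hM_closure m)
  · simpa only [← Ideal.coe_closure, SetLike.coe_set_eq, SetLike.mem_coe] using
      Ideal.closure_pow_eq_closure_pow_succ_iff hM_closure m

/-- Lemma 2.5: if `M` is a maximal ideal with `M = cl(fA)`, then `dim(M/cl M²) ≤ 1`,
`cl(M^m) = cl(f^m A)` for all `m ≥ 1`, and `cl(M^m) = cl(M^{m+1})` iff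
`f^m ∈ cl(M^{m+1})`. -/
theorem principal_maximal_ideal_powers {A : Type*} [NormedCommRing A]
    [NormedAlgebra ℂ A] [CompleteSpace A]
    (M : Ideal A) (hM : M.IsMaximal) (f : A) (hf : f ∈ M)
    (hMf : (M : Set A) = closure ((Ideal.span {f} : Ideal A) : Set A)) :
    Module.rank ℂ
      (↥(M.restrictScalars ℂ) ⧸
        Submodule.comap (M.restrictScalars ℂ).subtype (clPow M 2)) ≤ 1 ∧
    ∀ m : ℕ, 1 ≤ m →
      closure ((M ^ m : Ideal A) : Set A)
        = closure ((Ideal.span {f ^ m} : Ideal A) : Set A) ∧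
      (closure ((M ^ m : Ideal A) : Set A) = closure ((M ^ (m + 1) : Ideal A) : Set A)
        ↔ f ^ m ∈ closure ((M ^ (m + 1) : Ideal A) : Set A)) :=
  principal_maximal_ideal_powers_general M hM f hMf

end
end

section
/- Let K be a compact plane set and let a ∈ K. For each m ∈ ℕ, there is a nondegenerate bounded point derivation of order m on R(K) at a if and only if δ_{a,m} is continuous on R₀(K). There is a nondegenerate bounded point derivation of infinite order on R(K) at a if and only if δ_{a,m} is continuous on R₀(K) for all m ∈ ℕ. -/
open scoped ENNReal
open Metric Set Filter

noncomputable section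

open Polynomial Topology

/-!
A bounded point derivation `d` of order `m` at `a` is pinned down on `R₀(K)` by
`λ = d⁽¹⁾(z - a)`: dividing `p` by `q` to order `k` at `a` writes `f = p / q` as its Taylor
polynomial plus `(z - a)^(k+1)` times a rational function, whence
`d⁽ᵏ⁾(f) = ∑_{j ≤ k} δ_{a,j}(f) d⁽ᵏ⁾((z - a)^j)` with `d⁽ᵏ⁾((z - a)^k) = λ^k`. Nondegeneracy forces
`λ ≠ 0`, so solving for `δ_{a,k}(f)` bounds `δ_{a,k}` by induction on `k`.

Conversely, if `δ_{a,m}` is bounded then so is every `δ_{a,j}`, `j ≤ m`, because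
`δ_{a,j}(f) = δ_{a,m}((z - a)^(m-j) f)`. The continuous extensions of the `δ_{a,j}` to `R(K)` form a
point derivation, since the Leibniz rule for rational functions passes to the uniform closure, and
it is nondegenerate because `δ_{a,1}(z - a) = 1`.
-/

section deltaVal

variable {f g : ℂ → ℂ} {a : ℂ} {m : ℕ}

lemma deltaVal_congr (h : f =ᶠ[𝓝 a] g) (m : ℕ) : deltaVal m f a = deltaVal m g a := by
  rw [deltaVal, deltaVal, h.iteratedDeriv_eq]

lemma deltaVal_zero (f : ℂ → ℂ) (a : ℂ) : deltaVal 0 f a = f a := by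
  simp [deltaVal]

lemma deltaVal_add (hf : ContDiffAt ℂ m f a) (hg : ContDiffAt ℂ m g a) :
    deltaVal m (f + g) a = deltaVal m f a + deltaVal m g a := by
  rw [deltaVal, iteratedDeriv_add hf hg, add_div]; rfl

lemma deltaVal_sub (hf : ContDiffAt ℂ m f a) (hg : ContDiffAt ℂ m g a) :
    deltaVal m (f - g) a = deltaVal m f a - deltaVal m g a := by
  rw [deltaVal, iteratedDeriv_sub hf hg, sub_div]; rfl

lemma deltaVal_const_smul (c : ℂ) (f : ℂ → ℂ) : deltaVal m (c • f) a = c * deltaVal m f a := by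
  rw [deltaVal, iteratedDeriv_const_smul_field, smul_eq_mul, mul_div_assoc]; rfl

lemma deltaVal_sum {ι : Type*} {s : Finset ι} {F : ι → ℂ → ℂ}
    (hF : ∀ i ∈ s, ContDiffAt ℂ m (F i) a) :
    deltaVal m (∑ i ∈ s, F i) a = ∑ i ∈ s, deltaVal m (F i) a := by
  rw [deltaVal, iteratedDeriv_sum hF, Finset.sum_div]; rfl

lemma deltaVal_mul (hf : ContDiffAt ℂ m f a) (hg : ContDiffAt ℂ m g a) :
    deltaVal m (f * g) a = ∑ j ∈ Finset.range (m + 1), deltaVal j f a * deltaVal (m - j) g a := by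
  rw [deltaVal, iteratedDeriv_mul hf hg, Finset.sum_div]
  refine Finset.sum_congr rfl fun j hj => ?_
  have hjm : j ≤ m := Nat.lt_succ_iff.mp (Finset.mem_range.mp hj)
  have : (m.factorial : ℂ) ≠ 0 := Nat.cast_ne_zero.mpr m.factorial_ne_zero
  rw [deltaVal, deltaVal, Nat.cast_choose ℂ hjm]
  field_simp

lemma deltaVal_sub_pow (a : ℂ) (j e : ℕ) :
    deltaVal j (fun z => (z - a) ^ e) a = if j = e then 1 else 0 := by
  rw [deltaVal, iteratedDeriv_comp_sub_const j (· ^ e)]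
  simp only [iteratedDeriv_pow, sub_self]
  rcases lt_trichotomy j e with h | rfl | h
  · simp [h.ne, Nat.sub_ne_zero_of_lt h]
  · simp [Nat.descFactorial_self, Nat.factorial_ne_zero]
  · simp [h.ne', Nat.descFactorial_eq_zero_iff_lt.mpr h]

lemma deltaVal_eval (p : ℂ[X]) (a : ℂ) (j : ℕ) :
    deltaVal j (fun z => p.eval z) a = (derivative^[j] p).eval a / j.factorial := by
  have : deriv^[j] (fun z => p.eval z) = fun z => (derivative^[j] p).eval z := by
    induction j with
    | zero => rfl
    | succ j ih =>
      rw [Function.iterate_succ_apply', ih, Function.iterate_succ_apply']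
      exact funext fun z => (derivative^[j] p).deriv
  rw [deltaVal, iteratedDeriv_eq_iterate, this]

end deltaVal

lemma X_sub_C_pow_dvd_of_deltaVal_eq_zero {p : ℂ[X]} {a : ℂ} {k : ℕ}
    (h : ∀ j ≤ k, deltaVal j (fun z => p.eval z) a = 0) : (X - C a) ^ (k + 1) ∣ p := by
  rcases eq_or_ne p 0 with rfl | hp
  · exact dvd_zero _
  rw [← le_rootMultiplicity_iff hp, Nat.succ_le_iff,
    lt_rootMultiplicity_iff_isRoot_iterate_derivative hp]
  intro j hj
  simpa [deltaVal_eval, IsRoot, Nat.factorial_ne_zero] using h j hj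

lemma Polynomial.contDiff_eval (p : ℂ[X]) {n : WithTop ℕ∞} : ContDiff ℂ n fun z => p.eval z :=
  p.differentiable.contDiff

lemma contDiffAt_ratFun {p q : ℂ[X]} {z : ℂ} (hq : q.eval z ≠ 0) {n : WithTop ℕ∞} :
    ContDiffAt ℂ n (ratFun p q) z :=
  p.contDiff_eval.contDiffAt.div q.contDiff_eval.contDiffAt hq

lemma deltaVal_sum_C_mul_X_sub_C_pow (c : ℕ → ℂ) (a : ℂ) {i k : ℕ} (hik : i ≤ k) :
    deltaVal i (fun z => (∑ j ∈ Finset.range (k + 1), C (c j) * (X - C a) ^ j).eval z) a = c i := by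
  have : (fun z => (∑ j ∈ Finset.range (k + 1), C (c j) * (X - C a) ^ j).eval z)
      = ∑ j ∈ Finset.range (k + 1), c j • fun z => (z - a) ^ j := by
    ext z; simp [eval_finsetSum]
  rw [this, deltaVal_sum fun j _ => by fun_prop]
  simp [deltaVal_const_smul, deltaVal_sub_pow, Nat.lt_succ_of_le hik]

theorem exists_eq_taylor_mul_add {p q : ℂ[X]} {a : ℂ} (hq : q.eval a ≠ 0) (k : ℕ) :
    ∃ r : ℂ[X], p = (∑ j ∈ Finset.range (k + 1), C (deltaVal j (ratFun p q) a) * (X - C a) ^ j) * q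
      + (X - C a) ^ (k + 1) * r := by
  set T := ∑ j ∈ Finset.range (k + 1), C (deltaVal j (ratFun p q) a) * (X - C a) ^ j
  have hfactor : (fun z => (p - T * q).eval z) =ᶠ[𝓝 a]
      (ratFun p q - fun z => T.eval z) * fun z => q.eval z := by
    filter_upwards [q.continuous.continuousAt.eventually_ne hq] with z hz
    simp [ratFun, sub_mul, div_mul_cancel₀ _ hz]
  obtain ⟨r, hr⟩ : (X - C a) ^ (k + 1) ∣ p - T * q := by
    refine X_sub_C_pow_dvd_of_deltaVal_eq_zero fun j hj => ?_
    rw [deltaVal_congr hfactor, deltaVal_mul (f := ratFun p q - fun z => T.eval z)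
      ((contDiffAt_ratFun hq).sub T.contDiff_eval.contDiffAt) q.contDiff_eval.contDiffAt]
    refine Finset.sum_eq_zero fun i hi => ?_
    have hik : i ≤ k := (Nat.lt_succ_iff.mp (Finset.mem_range.mp hi)).trans hj
    rw [deltaVal_sub (contDiffAt_ratFun hq) T.contDiff_eval.contDiffAt,
      deltaVal_sum_C_mul_X_sub_C_pow _ a hik, sub_self, zero_mul]
  exact ⟨r, by linear_combination hr⟩

/-- Asking for agreement with `p / q` only off the zeros of `q` (where `ratFun` takes the junk
value `0`) is what makes this set closed under addition. -/
def ratFunAlg (K : Set ℂ) : Subalgebra ℂ (ℂ → ℂ) where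
  carrier := {f | ∃ p q : ℂ[X], (∀ z ∈ K, q.eval z ≠ 0) ∧ ∀ z, q.eval z ≠ 0 → f z = ratFun p q z}
  mul_mem' := by
    rintro f g ⟨p, q, hqK, hf⟩ ⟨r, s, hsK, hg⟩
    refine ⟨p * r, q * s, fun z hz => by simp [hqK z hz, hsK z hz], fun z hz => ?_⟩
    simp only [eval_mul, ne_eq, mul_eq_zero, not_or] at hz
    simp [hf z hz.1, hg z hz.2, ratFun, div_mul_div_comm]
  add_mem' := by
    rintro f g ⟨p, q, hqK, hf⟩ ⟨r, s, hsK, hg⟩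
    refine ⟨p * s + r * q, q * s, fun z hz => by simp [hqK z hz, hsK z hz], fun z hz => ?_⟩
    simp only [eval_mul, ne_eq, mul_eq_zero, not_or] at hz
    simp [hf z hz.1, hg z hz.2, ratFun, div_add_div _ _ hz.1 hz.2, mul_comm]
  algebraMap_mem' c := ⟨C c, 1, by simp, by simp [ratFun]⟩

section RationalAlgebra

variable {K : Set ℂ}

lemma ratFun_mem_ratFunAlg {p q : ℂ[X]} (hq : ∀ z ∈ K, q.eval z ≠ 0) :
    ratFun p q ∈ ratFunAlg K :=
  ⟨p, q, hq, fun _ _ => rfl⟩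

lemma sub_pow_mem_ratFunAlg (a : ℂ) (n : ℕ) : (fun z => (z - a) ^ n) ∈ ratFunAlg K :=
  ⟨(X - C a) ^ n, 1, by simp, by simp [ratFun]⟩

lemma eventuallyEq_ratFun {f : ℂ → ℂ} {p q : ℂ[X]}
    (hf : ∀ z, q.eval z ≠ 0 → f z = ratFun p q z) {z : ℂ} (hz : q.eval z ≠ 0) :
    f =ᶠ[𝓝 z] ratFun p q := by
  filter_upwards [q.continuous.continuousAt.eventually_ne hz] with w hw using hf w hw

lemma contDiffAt_of_mem_ratFunAlg {f : ℂ → ℂ} (hf : f ∈ ratFunAlg K) {z : ℂ} (hz : z ∈ K)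
    {n : WithTop ℕ∞} : ContDiffAt ℂ n f z := by
  obtain ⟨p, q, hqK, hpq⟩ := hf
  exact (contDiffAt_ratFun (p := p) (hqK z hz)).congr_of_eventuallyEq
    (eventuallyEq_ratFun hpq (hqK z hz))

variable (K) in
def ratFunRestrict : ratFunAlg K →ₐ[ℂ] C(K, ℂ) where
  toFun f := ⟨fun z => f.1 z, continuous_iff_continuousAt.2 fun z =>
    (contDiffAt_of_mem_ratFunAlg f.2 z.2 (n := 0)).continuousAt.comp
      continuous_subtype_val.continuousAt⟩
  map_one' := rfl
  map_mul' _ _ := rfl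
  map_zero' := rfl
  map_add' _ _ := rfl
  commutes' _ := rfl

lemma range_ratFunRestrict : ((ratFunRestrict K).range : Set C(K, ℂ)) = R0 K := by
  ext g
  constructor
  · rintro ⟨⟨f, p, q, hqK, hpq⟩, rfl⟩
    exact ⟨p, q, hqK, fun z => hpq z (hqK z z.2)⟩
  · rintro ⟨p, q, hqK, hg⟩
    exact ⟨⟨ratFun p q, ratFun_mem_ratFunAlg hqK⟩, ContinuousMap.ext fun z => (hg z).symm⟩

variable (K) in
def subPow (a : ℂ) (n : ℕ) : ratFunAlg K :=
  ⟨fun z => (z - a) ^ n, sub_pow_mem_ratFunAlg a n⟩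

variable [CompactSpace K]

variable (K) in
def rkAlg : Subalgebra ℂ C(K, ℂ) :=
  (ratFunRestrict K).range.topologicalClosure

lemma coe_rkAlg : (rkAlg K : Set C(K, ℂ)) = RK K := by
  rw [rkAlg, Subalgebra.topologicalClosure_coe, range_ratFunRestrict]; rfl

lemma mem_rkAlg {f : C(K, ℂ)} : f ∈ rkAlg K ↔ f ∈ RK K := by
  rw [← SetLike.mem_coe, coe_rkAlg]

variable (K) in
def toRK : ratFunAlg K →ₐ[ℂ] rkAlg K :=
  (Subalgebra.inclusion (Subalgebra.le_topologicalClosure _)).comp (ratFunRestrict K).rangeRestrict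

lemma toRK_apply (f : ratFunAlg K) (z : K) : (toRK K f : C(K, ℂ)) z = f.1 z :=
  rfl

lemma coe_toRK_subPow (a : ℂ) (n : ℕ) : (toRK K (subPow K a n) : C(K, ℂ)) = zamMap K a n :=
  rfl

lemma denseRange_toRK : DenseRange (toRK K) :=
  ((denseRange_inclusion_iff (Subalgebra.le_topologicalClosure _)).2 subset_rfl).comp
    (ratFunRestrict K).rangeRestrict_surjective.denseRange (continuous_inclusion _)

lemma supNormOn_eq_norm {g : ℂ → ℂ} {F : C(K, ℂ)} (h : ∀ z : K, F z = g z) :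
    supNormOn K g = ‖F‖ := by
  simp [ContinuousMap.norm_eq_iSup_norm, supNormOn, h]

end RationalAlgebra

section Delta

variable {K : Set ℂ} {a : ℂ}

def deltaLin (ha : a ∈ K) (k : ℕ) : ratFunAlg K →ₗ[ℂ] ℂ where
  toFun f := deltaVal k f a
  map_add' f g :=
    deltaVal_add (contDiffAt_of_mem_ratFunAlg f.2 ha) (contDiffAt_of_mem_ratFunAlg g.2 ha)
  map_smul' c f := deltaVal_const_smul c f

lemma deltaLin_apply (ha : a ∈ K) (k : ℕ) (f : ratFunAlg K) : deltaLin ha k f = deltaVal k f a :=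
  rfl

variable [CompactSpace K]

/-- `extendOfNorm` factors `δ_{a,k}` through the restriction to `K`, which is possible exactly when
`DeltaCont K a k` holds; otherwise this is the junk value `0`. -/
def deltaExt (ha : a ∈ K) (k : ℕ) : rkAlg K →L[ℂ] ℂ :=
  (deltaLin ha k).extendOfNorm (toRK K).toLinearMap

variable (ha : a ∈ K)

include ha in
lemma deltaCont_iff {k : ℕ} :
    DeltaCont K a k ↔ ∃ C, ∀ f, ‖deltaLin ha k f‖ ≤ C * ‖toRK K f‖ := by
  constructor
  · rintro ⟨C, hC⟩
    refine ⟨C, fun f => ?_⟩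
    obtain ⟨p, q, hqK, hpq⟩ := f.2
    have hnorm : supNormOn K (ratFun p q) = ‖toRK K f‖ :=
      supNormOn_eq_norm (F := (toRK K f : C(K, ℂ))) fun z => hpq z (hqK z z.2)
    rw [deltaLin_apply, deltaVal_congr (eventuallyEq_ratFun hpq (hqK a ha)), ← hnorm]
    exact hC p q hqK
  · rintro ⟨C, hC⟩
    refine ⟨C, fun p q hq => ?_⟩
    have hnorm : supNormOn K (ratFun p q) = ‖toRK K ⟨ratFun p q, ratFun_mem_ratFunAlg hq⟩‖ :=
      supNormOn_eq_norm (F := (toRK K ⟨ratFun p q, ratFun_mem_ratFunAlg hq⟩ : C(K, ℂ)))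
        fun z => toRK_apply _ z
    rw [hnorm]
    exact hC ⟨ratFun p q, ratFun_mem_ratFunAlg hq⟩

include ha in
lemma deltaCont_zero : DeltaCont K a 0 := by
  refine (deltaCont_iff ha).2 ⟨1, fun f => ?_⟩
  rw [one_mul, deltaLin_apply, deltaVal_zero, ← toRK_apply f ⟨a, ha⟩]
  exact ContinuousMap.norm_coe_le_norm _ _

include ha in
lemma DeltaCont.of_le {m j : ℕ} (h : DeltaCont K a m) (hjm : j ≤ m) : DeltaCont K a j := by
  obtain ⟨C, hC⟩ := (deltaCont_iff ha).1 h
  refine (deltaCont_iff ha).2 ⟨|C| * ‖toRK K (subPow K a (m - j))‖, fun f => ?_⟩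
  have hshift : deltaLin ha j f = deltaLin ha m (subPow K a (m - j) * f) := by
    rw [deltaLin_apply, deltaLin_apply, Subalgebra.coe_mul, deltaVal_mul
      (contDiffAt_of_mem_ratFunAlg (subPow K a (m - j)).2 ha) (contDiffAt_of_mem_ratFunAlg f.2 ha),
      Finset.sum_eq_single_of_mem (m - j) (Finset.mem_range.2 (by omega))]
    · simp [subPow, deltaVal_sub_pow, Nat.sub_sub_self hjm]
    · intro i _ hi
      simp [subPow, deltaVal_sub_pow, hi]
  calc ‖deltaLin ha j f‖ ≤ C * ‖toRK K (subPow K a (m - j) * f)‖ := hshift ▸ hC _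
    _ ≤ |C| * (‖toRK K (subPow K a (m - j))‖ * ‖toRK K f‖) := by
      rw [map_mul]
      exact mul_le_mul (le_abs_self C) (norm_mul_le _ _) (norm_nonneg _) (abs_nonneg C)
    _ = _ := (mul_assoc _ _ _).symm

lemma deltaExt_toRK {k : ℕ} (h : DeltaCont K a k) (f : ratFunAlg K) :
    deltaExt ha k (toRK K f) = deltaVal k f a :=
  LinearMap.extendOfNorm_eq (e := (toRK K).toLinearMap) denseRange_toRK ((deltaCont_iff ha).1 h) f

end Delta

section Backward

variable {K : Set ℂ} {a : ℂ} [CompactSpace K]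

open Classical in
def pdOfDelta (ha : a ∈ K) (k : ℕ) (f : C(K, ℂ)) : ℂ :=
  if hf : f ∈ rkAlg K then deltaExt ha k ⟨f, hf⟩ else 0

variable (ha : a ∈ K)

lemma pdOfDelta_coe (k : ℕ) (f : rkAlg K) : pdOfDelta ha k f = deltaExt ha k f :=
  dif_pos f.2

lemma continuous_pdOfDelta (k : ℕ) : Continuous fun f : RK K => pdOfDelta ha k f.1 := by
  have hcoe : (fun f : RK K => pdOfDelta ha k f.1) =
      fun f : RK K => deltaExt ha k ⟨f.1, mem_rkAlg.2 f.2⟩ :=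
    funext fun f => pdOfDelta_coe ha k ⟨f.1, mem_rkAlg.2 f.2⟩
  rw [hcoe]
  exact (deltaExt ha k).continuous.comp (continuous_subtype_val.subtype_mk _)

lemma pdOfDelta_zero : ∀ f ∈ RK K, ∀ h : a ∈ K, pdOfDelta ha 0 f = f ⟨a, h⟩ := by
  intro f hf _
  rw [← mem_rkAlg] at hf
  rw [pdOfDelta_coe ha 0 ⟨f, hf⟩]
  refine denseRange_toRK.induction_on (p := fun g : rkAlg K => deltaExt ha 0 g = g.1 ⟨a, ha⟩)
    ⟨f, hf⟩ (isClosed_eq (deltaExt ha 0).continuous ?_) fun g => ?_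
  · exact (continuous_eval_const _).comp continuous_subtype_val
  · rw [deltaExt_toRK ha (deltaCont_zero ha), deltaVal_zero, toRK_apply]

lemma pdOfDelta_add (k : ℕ) :
    ∀ f ∈ RK K, ∀ g ∈ RK K, pdOfDelta ha k (f + g) = pdOfDelta ha k f + pdOfDelta ha k g := by
  intro f hf g hg
  rw [← mem_rkAlg] at hf hg
  rw [show f + g = ((⟨f, hf⟩ + ⟨g, hg⟩ : rkAlg K) : C(K, ℂ)) from rfl, pdOfDelta_coe, map_add,
    ← pdOfDelta_coe, ← pdOfDelta_coe]

lemma pdOfDelta_smul (k : ℕ) (c : ℂ) :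
    ∀ f ∈ RK K, pdOfDelta ha k (c • f) = c * pdOfDelta ha k f := by
  intro f hf
  rw [← mem_rkAlg] at hf
  rw [show c • f = ((c • ⟨f, hf⟩ : rkAlg K) : C(K, ℂ)) from rfl, pdOfDelta_coe, map_smul,
    ← pdOfDelta_coe, smul_eq_mul]

lemma pdOfDelta_mul {k : ℕ} (h : ∀ j ≤ k, DeltaCont K a j) :
    ∀ f ∈ RK K, ∀ g ∈ RK K, pdOfDelta ha k (f * g) =
      ∑ j ∈ Finset.range (k + 1), pdOfDelta ha j f * pdOfDelta ha (k - j) g := by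
  intro f hf g hg
  rw [← mem_rkAlg] at hf hg
  simp only [pdOfDelta_coe ha _ ⟨f, hf⟩, pdOfDelta_coe ha _ ⟨g, hg⟩]
  rw [show f * g = ((⟨f, hf⟩ * ⟨g, hg⟩ : rkAlg K) : C(K, ℂ)) from rfl, pdOfDelta_coe]
  refine denseRange_toRK.induction_on₂ (p := fun u v : rkAlg K => deltaExt ha k (u * v) =
    ∑ j ∈ Finset.range (k + 1), deltaExt ha j u * deltaExt ha (k - j) v) ?_ (fun u v => ?_) _ _
  · exact isClosed_eq ((deltaExt ha k).continuous.comp continuous_mul) <|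
      continuous_finsetSum _ fun j _ => ((deltaExt ha j).continuous.comp continuous_fst).mul
        ((deltaExt ha (k - j)).continuous.comp continuous_snd)
  · rw [← map_mul, deltaExt_toRK ha (h k le_rfl), Subalgebra.coe_mul,
      deltaVal_mul (contDiffAt_of_mem_ratFunAlg u.2 ha) (contDiffAt_of_mem_ratFunAlg v.2 ha)]
    refine Finset.sum_congr rfl fun j hj => ?_
    rw [deltaExt_toRK ha (h j (Nat.lt_succ_iff.1 (Finset.mem_range.1 hj))),
      deltaExt_toRK ha (h (k - j) (Nat.sub_le k j))]

lemma pdOfDelta_zamMap_one (h : DeltaCont K a 1) : pdOfDelta ha 1 (zamMap K a 1) = 1 := by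
  rw [← coe_toRK_subPow, pdOfDelta_coe, deltaExt_toRK ha h]
  exact (deltaVal_sub_pow a 1 1).trans (if_pos rfl)

include ha in
theorem hasNBPD_of_deltaCont {m : ℕ} (hm : 1 ≤ m) (h : DeltaCont K a m) : HasNBPD K a m :=
  ⟨pdOfDelta ha,
    ⟨pdOfDelta_zero ha, fun k _ => pdOfDelta_add ha k, fun k _ => pdOfDelta_smul ha k,
      fun k _ hkm => pdOfDelta_mul ha fun j hj => h.of_le ha (hj.trans hkm)⟩,
    fun k _ => continuous_pdOfDelta ha k,
    zamMap K a 1, mem_rkAlg.1 (toRK K (subPow K a 1)).2, by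
      rw [pdOfDelta_zamMap_one ha (h.of_le ha hm)]; exact one_ne_zero⟩

include ha in
theorem hasNBPDInf_of_deltaCont (h : ∀ m : ℕ, 1 ≤ m → DeltaCont K a m) : HasNBPDInf K a :=
  have hall (k : ℕ) : DeltaCont K a k := (h (k + 1) k.succ_pos).of_le ha k.le_succ
  ⟨pdOfDelta ha,
    ⟨pdOfDelta_zero ha, pdOfDelta_add ha, pdOfDelta_smul ha,
      fun _ _ => pdOfDelta_mul ha fun j _ => hall j⟩,
    continuous_pdOfDelta ha,
    zamMap K a 1, mem_rkAlg.1 (toRK K (subPow K a 1)).2, by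
      rw [pdOfDelta_zamMap_one ha (hall 1)]; exact one_ne_zero⟩

end Backward

lemma zamMap_eq_pow (K : Set ℂ) (a : ℂ) (n : ℕ) : zamMap K a n = zamMap K a 1 ^ n := by
  ext z; simp [zamMap]

lemma IsPDInf.isPDOrder {K : Set ℂ} {a : ℂ} {d : ℕ → C(K, ℂ) → ℂ} (hd : IsPDInf K a d) (m : ℕ) :
    IsPDOrder K a m d :=
  ⟨hd.1, fun k _ => hd.2.1 k, fun k _ => hd.2.2.1 k, fun k hk _ => hd.2.2.2 k hk⟩

section Forward

variable {K : Set ℂ} {a : ℂ} {d : ℕ → C(K, ℂ) → ℂ} {m : ℕ} [CompactSpace K] (ha : a ∈ K)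

include ha in
lemma IsPDOrder.apply_one_eq_zero (hd : IsPDOrder K a m d) (hm : 1 ≤ m) : d 1 1 = 0 := by
  have h1 : (1 : C(K, ℂ)) ∈ RK K := mem_rkAlg.1 (one_mem _)
  have := hd.2.2.2 1 le_rfl hm 1 h1 1 h1
  simp only [mul_one, Finset.sum_range_succ, Finset.sum_range_zero, Nat.sub_zero, Nat.sub_self,
    hd.1 1 h1 ha, ContinuousMap.one_apply, zero_add, one_mul] at this
  linear_combination -this

lemma IsPDOrder.apply_pow_of_lt (hd : IsPDOrder K a m d) {f : C(K, ℂ)} (hf : f ∈ RK K)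
    (hfa : f ⟨a, ha⟩ = 0) {n j : ℕ} (hjn : j < n) (hjm : j ≤ m) : d j (f ^ n) = 0 := by
  have hpow (n : ℕ) : f ^ n ∈ RK K := mem_rkAlg.1 (pow_mem (mem_rkAlg.2 hf) n)
  induction n generalizing j with
  | zero => omega
  | succ n ih =>
    rcases Nat.eq_zero_or_pos j with rfl | hj
    · simp [hd.1 _ (hpow _) ha, hfa]
    rw [pow_succ, hd.2.2.2 j hj hjm _ (hpow n) _ hf]
    refine Finset.sum_eq_zero fun i hi => ?_
    have hij := Nat.lt_succ_iff.1 (Finset.mem_range.1 hi)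
    rcases lt_or_ge i n with hin | hin
    · rw [ih hin (hij.trans hjm), zero_mul]
    · rw [show j - i = 0 by omega, hd.1 f hf ha, hfa, mul_zero]

lemma IsPDOrder.apply_pow_self (hd : IsPDOrder K a m d) {f : C(K, ℂ)} (hf : f ∈ RK K)
    (hfa : f ⟨a, ha⟩ = 0) {n : ℕ} (hn : 1 ≤ n) (hnm : n ≤ m) : d n (f ^ n) = d 1 f ^ n := by
  induction n, hn using Nat.le_induction with
  | base => rw [pow_one, pow_one]
  | succ n hn ih =>
    rw [pow_succ, hd.2.2.2 (n + 1) (by omega) hnm _ (mem_rkAlg.1 (pow_mem (mem_rkAlg.2 hf) n)) _ hf,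
      Finset.sum_range_succ, Finset.sum_range_succ, Finset.sum_eq_zero fun i hi => by
        rw [hd.apply_pow_of_lt ha hf hfa (Finset.mem_range.1 hi)
          (by have := Finset.mem_range.1 hi; omega), zero_mul],
      ih (by omega), Nat.sub_self, hd.1 f hf ha, hfa, Nat.add_sub_cancel_left, pow_succ]
    ring

def IsPDOrder.toLinearMap (hd : IsPDOrder K a m d) {k : ℕ} (hk : k ≤ m) : rkAlg K →ₗ[ℂ] ℂ where
  toFun f := d k f
  map_add' f g := hd.2.1 k hk f (mem_rkAlg.1 f.2) g (mem_rkAlg.1 g.2)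
  map_smul' c f := hd.2.2.1 k hk c f (mem_rkAlg.1 f.2)

def IsPDOrder.toCLM (hd : IsPDOrder K a m d) {k : ℕ} (hk : k ≤ m)
    (hcont : Continuous fun f : RK K => d k f.1) : rkAlg K →L[ℂ] ℂ :=
  ⟨hd.toLinearMap hk, hcont.comp (continuous_subtype_val.subtype_mk fun f => mem_rkAlg.1 f.2)⟩

include ha in
lemma IsPDOrder.apply_toRK (hd : IsPDOrder K a m d) {k : ℕ} (hk1 : 1 ≤ k) (hkm : k ≤ m)
    (f : ratFunAlg K) :
    d k (toRK K f) = ∑ j ∈ Finset.range (k + 1), deltaVal j f a * d k (zamMap K a j) := by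
  obtain ⟨p, q, hqK, hpq⟩ := f.2
  obtain ⟨r, hr⟩ := exists_eq_taylor_mul_add (p := p) (hqK a ha) k
  have hδ (j : ℕ) : deltaVal j f a = deltaVal j (ratFun p q) a :=
    deltaVal_congr (eventuallyEq_ratFun hpq (hqK a ha)) j
  set g : ratFunAlg K := ⟨ratFun r q, ratFun_mem_ratFunAlg hqK⟩
  have hsplit : toRK K f = ∑ j ∈ Finset.range (k + 1), deltaVal j f a • toRK K (subPow K a j) +
      toRK K (subPow K a (k + 1)) * toRK K g := by
    refine Subtype.ext (ContinuousMap.ext fun z => ?_)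
    have hz := hqK z z.2
    have hpz := congrArg (Polynomial.eval (z : ℂ)) hr
    simp only [eval_add, eval_mul, eval_finsetSum, eval_pow, eval_sub, eval_X, eval_C] at hpz
    simp only [Subalgebra.coe_add, Subalgebra.coe_mul, Subalgebra.coe_smul,
      AddSubmonoidClass.coe_finsetSum, ContinuousMap.add_apply, ContinuousMap.mul_apply,
      ContinuousMap.coe_sum, Finset.sum_apply, ContinuousMap.smul_apply, toRK_apply, subPow, g,
      hpq z hz, ratFun, hδ, smul_eq_mul]
    field_simp
    linear_combination hpz
  have hmem (j : ℕ) : zamMap K a j ∈ RK K := mem_rkAlg.1 (toRK K (subPow K a j)).2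
  have hrem : d k (zamMap K a (k + 1) * toRK K g) = 0 := by
    rw [hd.2.2.2 k hk1 hkm _ (hmem _) _ (mem_rkAlg.1 (toRK K g).2)]
    refine Finset.sum_eq_zero fun i hi => ?_
    have hik := Nat.lt_succ_iff.1 (Finset.mem_range.1 hi)
    rw [zamMap_eq_pow, hd.apply_pow_of_lt ha (hmem 1) (by simp [zamMap]) (n := k + 1) (by omega)
      (hik.trans hkm), zero_mul]
  change hd.toLinearMap hkm (toRK K f) = _
  rw [hsplit, map_add, map_sum]
  simp only [map_smul, smul_eq_mul]
  exact add_eq_left.2 hrem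

include ha in
/-- Otherwise `d 1` would vanish on `R₀(K)` (by `apply_toRK` with `k = 1`), hence on `R(K)`. -/
lemma IsPDOrder.apply_zamMap_one_ne_zero (hd : IsPDOrder K a m d) (hm : 1 ≤ m)
    (hcont : Continuous fun f : RK K => d 1 f.1) (hnd : ∃ f ∈ RK K, d 1 f ≠ 0) :
    d 1 (zamMap K a 1) ≠ 0 := by
  intro hlam
  obtain ⟨f, hf, hne⟩ := hnd
  refine hne (denseRange_toRK.induction_on (p := fun g : rkAlg K => d 1 g = 0)
    ⟨f, mem_rkAlg.2 hf⟩ (isClosed_eq (hd.toCLM hm hcont).continuous continuous_const) fun g => ?_)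
  rw [hd.apply_toRK ha le_rfl hm, Finset.sum_range_succ, Finset.sum_range_one, hlam,
    zamMap_eq_pow K a 0, pow_zero, hd.apply_one_eq_zero ha hm]
  ring

include ha in
theorem IsPDOrder.deltaCont (hd : IsPDOrder K a m d) (hm : 1 ≤ m)
    (hcont : ∀ k ≤ m, Continuous fun f : RK K => d k f.1) (hnd : ∃ f ∈ RK K, d 1 f ≠ 0) :
    ∀ k ≤ m, DeltaCont K a k := by
  have hlam := hd.apply_zamMap_one_ne_zero ha hm (hcont 1 hm) hnd
  have hzam1 : zamMap K a 1 ∈ RK K := mem_rkAlg.1 (toRK K (subPow K a 1)).2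
  intro k
  induction k using Nat.strong_induction_on with
  | _ k ih =>
  intro hkm
  rcases Nat.eq_zero_or_pos k with rfl | hk1
  · exact deltaCont_zero ha
  have hbound : ∀ j ∈ Finset.range k, ∃ C, ∀ f, ‖deltaLin ha j f‖ ≤ C * ‖toRK K f‖ :=
    fun j hj => (deltaCont_iff ha).1
      (ih j (Finset.mem_range.1 hj) ((Finset.mem_range.1 hj).le.trans hkm))
  choose! C hC using hbound
  let L := hd.toCLM hkm (hcont k hkm)
  refine (deltaCont_iff ha).2 ⟨(‖L‖ + ∑ j ∈ Finset.range k, C j * ‖d k (zamMap K a j)‖) /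
    ‖d 1 (zamMap K a 1)‖ ^ k, fun f => ?_⟩
  have hsolve : deltaLin ha k f * d 1 (zamMap K a 1) ^ k =
      L (toRK K f) - ∑ j ∈ Finset.range k, deltaLin ha j f * d k (zamMap K a j) := by
    have := hd.apply_toRK ha hk1 hkm f
    rw [Finset.sum_range_succ, zamMap_eq_pow K a k,
      hd.apply_pow_self ha hzam1 (by simp [zamMap]) hk1 hkm] at this
    simp only [deltaLin_apply]
    change _ = d k (toRK K f) - _
    rw [this]
    ring
  rw [div_mul_eq_mul_div, le_div_iff₀ (by positivity), ← norm_pow, ← norm_mul, hsolve, add_mul,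
    Finset.sum_mul]
  refine (norm_sub_le _ _).trans (add_le_add (L.le_opNorm _)
    ((norm_sum_le _ _).trans (Finset.sum_le_sum fun j hj => ?_)))
  rw [norm_mul]
  calc ‖deltaLin ha j f‖ * ‖d k (zamMap K a j)‖
      ≤ C j * ‖toRK K f‖ * ‖d k (zamMap K a j)‖ :=
        mul_le_mul_of_nonneg_right (hC j hj f) (norm_nonneg _)
    _ = C j * ‖d k (zamMap K a j)‖ * ‖toRK K f‖ := by ring

end Forward

theorem derivation_iff_delta_cont_general (K : Set ℂ) (hK : IsCompact K)
    (a : ℂ) (ha : a ∈ K) :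
    (∀ m : ℕ, 1 ≤ m → (HasNBPD K a m ↔ DeltaCont K a m)) ∧
    (HasNBPDInf K a ↔ ∀ m : ℕ, 1 ≤ m → DeltaCont K a m) := by
  have : CompactSpace K := isCompact_iff_compactSpace.mp hK
  refine ⟨fun m hm => ⟨?_, hasNBPD_of_deltaCont ha hm⟩, ⟨?_, hasNBPDInf_of_deltaCont ha⟩⟩
  · rintro ⟨d, hd, hcont, hnd⟩
    exact hd.deltaCont ha hm hcont hnd m le_rfl
  · rintro ⟨d, hd, hcont, hnd⟩ m hm
    exact (hd.isPDOrder m).deltaCont ha hm (fun k _ => hcont k) hnd m le_rfl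

/-- Lemma 2.8: there is a nondegenerate bounded point derivation of order `m` on `R(K)`
at `a` iff `δ_{a,m}` is continuous on `R₀(K)`; similarly for infinite order. -/
theorem derivation_iff_delta_cont (K : Set ℂ) (hne : K.Nonempty) (hK : IsCompact K)
    (a : ℂ) (ha : a ∈ K) :
    (∀ m : ℕ, 1 ≤ m → (HasNBPD K a m ↔ DeltaCont K a m)) ∧
    (HasNBPDInf K a ↔ ∀ m : ℕ, 1 ≤ m → DeltaCont K a m) :=
  derivation_iff_delta_cont_general K hK a ha
end
end

section
/- Let a ∈ ℂ \ {0}, let 0 < r < |a|, set Δ = D(a,r) (so r(Δ) = r), and set s = s₀(Δ) = |a| − r > 0. Then there are two open discs Δ₁ and Δ₂ such that √Δ ⊆ Δ₁ ∪ Δ₂ and, for i = 1, 2: (a) s₀(Δᵢ) = √s; (b) r(Δᵢ) = √|a| − √s = r/(√|a| + √s) < r/(2√s); (c) for each m ∈ ℕ, r(Δᵢ)/s₀(Δᵢ)^{2m+1} < r/(2 s^{m+1}). -/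
open scoped ENNReal
open Metric Set Filter

noncomputable section

/-
If `α² = a`, then `z² − a = (z − α)(z + α)`, so a square root `z` of a point of `D(a, r)` has
`|z − α| · |z + α| < r`, while the parallelogram law gives
`|z − α|² + |z + α|² = 2(|z|² + |a|) ≥ 2(s + |a|)`. For `ρ = √|a| − √s` one has
`ρ²(2s + 2|a|) − ρ⁴ = r²`, so if both factors were `≥ ρ` then
`|z − α|²|z + α|² ≥ ρ²(|z − α|² + |z + α|²) − ρ⁴ ≥ r²`, a contradiction.
Hence `√D(a, r) ⊆ D(α, ρ) ∪ D(−α, ρ)`, and both discs lie at distance `|α| − ρ = √s` from `0`.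
-/

theorem min_lt_sub_of_mul_lt_of_le_sq_add_sq {u v A t : ℝ} (hu : 0 ≤ u) (hv : 0 ≤ v)
    (hA : 0 ≤ A) (ht : 0 ≤ t) (hmul : u * v < A ^ 2 - t ^ 2)
    (hsq : 2 * (A ^ 2 + t ^ 2) ≤ u ^ 2 + v ^ 2) :
    min u v < A - t := by
  by_contra! h
  have hρ : 0 ≤ A - t := by nlinarith
  have hρu : (A - t) ^ 2 ≤ u ^ 2 := pow_le_pow_left₀ hρ (h.trans (min_le_left u v)) 2
  have hρv : (A - t) ^ 2 ≤ v ^ 2 := pow_le_pow_left₀ hρ (h.trans (min_le_right u v)) 2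
  have hprod : 0 ≤ (u ^ 2 - (A - t) ^ 2) * (v ^ 2 - (A - t) ^ 2) :=
    mul_nonneg (by linarith) (by linarith)
  have hmul_sq : (u * v) ^ 2 < (A ^ 2 - t ^ 2) ^ 2 := by gcongr
  nlinarith [mul_le_mul_of_nonneg_left hsq (sq_nonneg (A - t))]

theorem sqrtSet_ball_subset_union (α : ℂ) {t : ℝ} (ht : 0 ≤ t) :
    sqrtSet (ball (α ^ 2) (‖α‖ ^ 2 - t ^ 2)) ⊆ ball α (‖α‖ - t) ∪ ball (-α) (‖α‖ - t) := by
  intro z hz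
  have hz : ‖z ^ 2 - α ^ 2‖ < ‖α‖ ^ 2 - t ^ 2 := by
    rwa [sqrtSet, mem_ofPred_eq, mem_ball, dist_eq_norm] at hz
  have hfactor : ‖z - α‖ * ‖z + α‖ = ‖z ^ 2 - α ^ 2‖ := by
    rw [← norm_mul]; ring_nf
  have hnorm : t ^ 2 ≤ ‖z‖ ^ 2 := by
    have := norm_sub_norm_le (α ^ 2) (z ^ 2)
    rw [norm_sub_rev, norm_pow, norm_pow] at this
    linarith
  have hpar : ‖z - α‖ ^ 2 + ‖z + α‖ ^ 2 = 2 * (‖z‖ ^ 2 + ‖α‖ ^ 2) := by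
    linarith [parallelogram_law_with_norm ℝ z α]
  rcases min_lt_iff.mp (min_lt_sub_of_mul_lt_of_le_sq_add_sq (norm_nonneg _) (norm_nonneg _)
      (norm_nonneg α) ht (hfactor ▸ hz) (by linarith)) with h | h
  · exact Or.inl (by rwa [mem_ball, dist_eq_norm])
  · exact Or.inr (by rwa [mem_ball, dist_eq_norm, sub_neg_eq_add])

theorem abs_dist_zero_sub_sub_norm {c : ℂ} {t : ℝ} (ht : 0 ≤ t) :
    |dist (0 : ℂ) c - (‖c‖ - t)| = t := by
  rw [dist_zero_left, sub_sub_cancel, abs_of_nonneg ht]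

theorem sqrt_sub_sqrt_eq_div {x y : ℝ} (hx : 0 ≤ x) (hy : 0 < y) :
    √x - √y = (x - y) / (√x + √y) := by
  have hpos : 0 < √x + √y := by positivity
  rw [eq_div_iff hpos.ne', mul_comm, ← sq_sub_sq, Real.sq_sqrt hx, Real.sq_sqrt hy.le]

theorem div_pow_two_mul_add_one_lt {ρ r σ : ℝ} (hσ : 0 < σ) (h : ρ < r / (2 * σ)) (m : ℕ) :
    ρ / σ ^ (2 * m + 1) < r / (2 * (σ ^ 2) ^ (m + 1)) := by
  have hrhs : r / (2 * (σ ^ 2) ^ (m + 1)) = r / (2 * σ) / σ ^ (2 * m + 1) := by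
    rw [div_div]; ring
  rw [hrhs]
  exact div_lt_div_of_pos_right h (by positivity)

theorem sqrt_of_disc_general (a : ℂ) (r : ℝ) (hr0 : 0 < r) (hr : r < ‖a‖)
    (s : ℝ) (hs : s = ‖a‖ - r) :
    ∃ (c₁ c₂ : ℂ) (r₁ r₂ : ℝ),
      sqrtSet (ball a r) ⊆ ball c₁ r₁ ∪ ball c₂ r₂ ∧
      |dist (0 : ℂ) c₁ - r₁| = Real.sqrt s ∧
      |dist (0 : ℂ) c₂ - r₂| = Real.sqrt s ∧
      r₁ = Real.sqrt (‖a‖) - Real.sqrt s ∧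
      r₂ = Real.sqrt (‖a‖) - Real.sqrt s ∧
      r₁ = r / (Real.sqrt (‖a‖) + Real.sqrt s) ∧
      r₂ = r / (Real.sqrt (‖a‖) + Real.sqrt s) ∧
      r₁ < r / (2 * Real.sqrt s) ∧
      r₂ < r / (2 * Real.sqrt s) ∧
      (∀ m : ℕ, 1 ≤ m →
        r₁ / |dist (0 : ℂ) c₁ - r₁| ^ (2 * m + 1) < r / (2 * s ^ (m + 1)) ∧
        r₂ / |dist (0 : ℂ) c₂ - r₂| ^ (2 * m + 1) < r / (2 * s ^ (m + 1))) := by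
  obtain ⟨α, rfl⟩ := IsAlgClosed.exists_pow_nat_eq a two_pos
  have hs0 : 0 < s := by linarith
  have hsqrt_s : 0 < √s := Real.sqrt_pos.mpr hs0
  have hnorm : ‖α‖ = √‖α ^ 2‖ := by rw [norm_pow, Real.sqrt_sq (norm_nonneg α)]
  have hradius : √‖α ^ 2‖ - √s = r / (√‖α ^ 2‖ + √s) := by
    rw [sqrt_sub_sqrt_eq_div (norm_nonneg _) hs0, hs, sub_sub_cancel]
  have hlt : √‖α ^ 2‖ - √s < r / (2 * √s) := by
    rw [hradius]
    exact div_lt_div_of_pos_left hr0 (by positivity)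
      (by linarith [Real.sqrt_lt_sqrt hs0.le (show s < ‖α ^ 2‖ by linarith)])
  have hcover : sqrtSet (ball (α ^ 2) r) ⊆ ball α (‖α‖ - √s) ∪ ball (-α) (‖α‖ - √s) := by
    convert sqrtSet_ball_subset_union α hsqrt_s.le using 3
    rw [Real.sq_sqrt hs0.le, ← norm_pow, hs, sub_sub_cancel]
  have hdist : |dist (0 : ℂ) α - (‖α‖ - √s)| = √s := abs_dist_zero_sub_sub_norm hsqrt_s.le
  have hdist' : |dist (0 : ℂ) (-α) - (‖α‖ - √s)| = √s := by
    simpa only [norm_neg] using abs_dist_zero_sub_sub_norm (c := -α) hsqrt_s.le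
  have hbrowder (m : ℕ) : (‖α‖ - √s) / √s ^ (2 * m + 1) < r / (2 * s ^ (m + 1)) := by
    simpa only [← hnorm, Real.sq_sqrt hs0.le] using div_pow_two_mul_add_one_lt hsqrt_s hlt m
  rw [hnorm] at hcover hdist hdist' hbrowder
  exact ⟨α, -α, _, _, hcover, hdist, hdist', rfl, rfl, hradius, hradius, hlt, hlt,
    fun m _ ↦ ⟨by rw [hdist]; exact hbrowder m, by rw [hdist']; exact hbrowder m⟩⟩

/-- Lemma 3.1: square roots of an open disc are covered by two discs with the stated
radii and distances to the origin. -/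
theorem sqrt_of_disc (a : ℂ) (ha : a ≠ 0) (r : ℝ) (hr0 : 0 < r) (hr : r < ‖a‖)
    (s : ℝ) (hs : s = ‖a‖ - r) :
    ∃ (c₁ c₂ : ℂ) (r₁ r₂ : ℝ),
      sqrtSet (ball a r) ⊆ ball c₁ r₁ ∪ ball c₂ r₂ ∧
      |dist (0 : ℂ) c₁ - r₁| = Real.sqrt s ∧
      |dist (0 : ℂ) c₂ - r₂| = Real.sqrt s ∧
      r₁ = Real.sqrt (‖a‖) - Real.sqrt s ∧
      r₂ = Real.sqrt (‖a‖) - Real.sqrt s ∧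
      r₁ = r / (Real.sqrt (‖a‖) + Real.sqrt s) ∧
      r₂ = r / (Real.sqrt (‖a‖) + Real.sqrt s) ∧
      r₁ < r / (2 * Real.sqrt s) ∧
      r₂ < r / (2 * Real.sqrt s) ∧
      (∀ m : ℕ, 1 ≤ m →
        r₁ / |dist (0 : ℂ) c₁ - r₁| ^ (2 * m + 1) < r / (2 * s ^ (m + 1)) ∧
        r₂ / |dist (0 : ℂ) c₂ - r₂| ^ (2 * m + 1) < r / (2 * s ^ (m + 1))) :=
  sqrt_of_disc_general a r hr0 hr s hs
end
end
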